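/- arXiv:2102.00526 — 7 statements merged into one kernel-verified Lean document; each statement's English description precedes it below -/
import Mathlib

section
/- There is no first-order sentence φ in the first-order language with a single binary relation symbol E (and equality) such that for every finite simple graph G (viewed as a structure for this language via its adjacency relation), G satisfies φ if and only if G is bipartite. Equivalently, the class of finite bipartite graphs is not finitely axiomatizable modulo finiteness. -/
/-!
Let `φ` have quantifier rank `K`. For `N` large, the cycles of lengths `2N + 2` (bipartite) and
`2N + 3` (not bipartite) are not told apart by `φ`: Duplicator wins the `K`-round
Ehrenfeucht–Fraïssé game by keeping the signed differences of the pebbled vertices equal as long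
as one of them is at most `2 ^ k` in absolute value, `k` being the number of rounds left.
A pebble placed close to an old one is answered at the same offset from its partner, and a pebble
far from all others by a vertex far from all others, which exists because the cycle is long.
-/
open FirstOrder

/-- A simple graph is *bipartite* if its vertex set is the union of two disjoint nonempty
subsets such that every edge joins a vertex of one subset to a vertex of the other. -/
def SimpleGraph.IsBipartite' {V : Type*} (G : SimpleGraph V) : Prop :=
  ∃ A B : Set V, A.Nonempty ∧ B.Nonempty ∧ Disjoint A B ∧ A ∪ B = Set.univ ∧
    ∀ x y : V, G.Adj x y → ((x ∈ A ∧ y ∈ B) ∨ (x ∈ B ∧ y ∈ A))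

namespace SimpleGraph

variable {V : Type*} {G : SimpleGraph V}

theorem IsBipartite'.colorable (h : G.IsBipartite') : G.Colorable 2 := by
  classical
  obtain ⟨A, B, -, -, hAB, -, hadj⟩ := h
  refine ⟨Coloring.mk (fun x => if x ∈ A then 0 else 1) fun {x y} hxy => ?_⟩
  rcases hadj x y hxy with ⟨hx, hy⟩ | ⟨hx, hy⟩
  · simp [hx, Set.disjoint_right.1 hAB hy]
  · simp [hy, Set.disjoint_right.1 hAB hx]

theorem Colorable.isBipartite' (h : G.Colorable 2) {x y : V} (hxy : G.Adj x y) :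
    G.IsBipartite' := by
  obtain ⟨c⟩ := h
  have hc : ∀ z, c z = 0 ∨ c z = 1 := fun z => by
    generalize c z = i
    fin_cases i <;> simp
  have hne : ∀ {u v}, G.Adj u v → c u = 0 ∧ c v = 1 ∨ c u = 1 ∧ c v = 0 := fun {u v} huv => by
    have := c.valid huv
    rcases hc u with hu | hu <;> rcases hc v with hv | hv <;> simp_all
  refine ⟨{z | c z = 0}, {z | c z = 1}, ?_, ?_, ?_, ?_, fun u v huv => hne huv⟩
  · rcases hne hxy with h | h
    exacts [⟨x, h.1⟩, ⟨y, h.2⟩]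
  · rcases hne hxy with h | h
    exacts [⟨y, h.2⟩, ⟨x, h.1⟩]
  · exact Set.disjoint_left.2 fun z (h0 : c z = 0) h1 => by simp_all
  · exact Set.eq_univ_of_forall hc

end SimpleGraph

namespace FirstOrder.Language

open Structure

variable {L : Language}

def BoundedFormula.quantifierRank {α : Type*} : ∀ {n}, L.BoundedFormula α n → ℕ
  | _, .falsum => 0
  | _, .equal _ _ => 0
  | _, .rel _ _ => 0
  | _, .imp φ ψ => max φ.quantifierRank ψ.quantifierRank
  | _, .all φ => φ.quantifierRank + 1

theorem Term.exists_eq_var_inr [L.IsRelational] {l : ℕ} (t : L.Term (Empty ⊕ Fin l)) :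
    ∃ i, t = var (Sum.inr i) := by
  cases t with
  | var x =>
    obtain ⟨⟨⟩⟩ | i := x
    exact ⟨i, rfl⟩
  | func f _ => exact isEmptyElim f

variable (L) (M N : Type*) [L.Structure M] [L.Structure N]

/-- `Rel k a b`: Duplicator survives `k` more rounds of the Ehrenfeucht–Fraïssé game from the
position where `a` and `b` are pebbled. -/
structure BackAndForthSystem where
  Rel : ℕ → ∀ {l : ℕ}, (Fin l → M) → (Fin l → N) → Prop
  eq_iff {k l : ℕ} {a : Fin l → M} {b : Fin l → N} (h : Rel k a b) (i j : Fin l) :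
    a i = a j ↔ b i = b j
  relMap_iff {k l : ℕ} {a : Fin l → M} {b : Fin l → N} (h : Rel k a b) {n : ℕ}
    (r : L.Relations n) (f : Fin n → Fin l) : RelMap r (a ∘ f) ↔ RelMap r (b ∘ f)
  forth {k l : ℕ} {a : Fin l → M} {b : Fin l → N} (h : Rel (k + 1) a b) (x : M) :
    ∃ y, Rel k (Fin.snoc a x) (Fin.snoc b y)
  back {k l : ℕ} {a : Fin l → M} {b : Fin l → N} (h : Rel (k + 1) a b) (y : N) :
    ∃ x, Rel k (Fin.snoc a x) (Fin.snoc b y)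

namespace BackAndForthSystem

variable {L M N} [L.IsRelational] (S : L.BackAndForthSystem M N)

theorem realize_iff {l : ℕ} (φ : L.BoundedFormula Empty l) {k : ℕ}
    (hk : φ.quantifierRank ≤ k) {a : Fin l → M} {b : Fin l → N} (hab : S.Rel k a b) :
    φ.Realize default a ↔ φ.Realize default b := by
  induction φ generalizing k with
  | falsum => rfl
  | equal t₁ t₂ =>
    obtain ⟨i, rfl⟩ := t₁.exists_eq_var_inr
    obtain ⟨j, rfl⟩ := t₂.exists_eq_var_inr
    exact S.eq_iff hab i j
  | rel r ts =>
    choose f hf using fun i => (ts i).exists_eq_var_inr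
    obtain rfl : ts = fun i => var (Sum.inr (f i)) := funext hf
    exact S.relMap_iff hab r f
  | imp φ ψ ihφ ihψ =>
    exact imp_congr (ihφ (le_of_max_le_left hk) hab) (ihψ (le_of_max_le_right hk) hab)
  | all φ ih =>
    obtain _ | k := k
    · exact absurd hk (Nat.not_succ_le_zero _)
    have hk : φ.quantifierRank ≤ k := Nat.le_of_succ_le_succ hk
    refine ⟨fun h y => ?_, fun h x => ?_⟩
    · obtain ⟨x, hx⟩ := S.back hab y
      exact (ih hk hx).1 (h x)
    · obtain ⟨y, hy⟩ := S.forth hab x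
      exact (ih hk hy).2 (h y)

theorem realize_sentence_iff (φ : L.Sentence)
    (h : S.Rel φ.quantifierRank (default : Fin 0 → M) (default : Fin 0 → N)) :
    M ⊨ φ ↔ N ⊨ φ :=
  S.realize_iff φ le_rfl h

end BackAndForthSystem

end FirstOrder.Language

open SimpleGraph

namespace ZMod

variable {m n l : ℕ}

theorem intCast_eq_zero_iff_of_abs_lt {z : ℤ} (h : |z| < m) : (z : ZMod m) = 0 ↔ z = 0 := by
  rw [intCast_zmod_eq_zero_iff_dvd]
  exact ⟨fun hd => Int.eq_zero_of_abs_lt_dvd hd h, fun hz => hz ▸ dvd_zero _⟩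

theorem exists_forall_sub_ne_of_mul_lt (t : ℕ) (b : Fin l → ZMod n) (h : l * (2 * t + 1) < n) :
    ∃ y : ZMod n, ∀ j (z : ℤ), |z| ≤ t → y - b j ≠ z := by
  classical
  have : NeZero n := ⟨by omega⟩
  let S := Finset.univ.biUnion fun j =>
    (Finset.Icc (-(t : ℤ)) t).image fun z : ℤ => b j + (z : ZMod n)
  have hS : S.card < (Finset.univ : Finset (ZMod n)).card := calc
    S.card ≤ ∑ j, ((Finset.Icc (-(t : ℤ)) t).image fun z : ℤ => b j + (z : ZMod n)).card :=
      Finset.card_biUnion_le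
    _ ≤ ∑ _j : Fin l, (2 * t + 1) := Finset.sum_le_sum fun j _ =>
      Finset.card_image_le.trans (by rw [Int.card_Icc]; omega)
    _ = l * (2 * t + 1) := by simp
    _ < (Finset.univ : Finset (ZMod n)).card := by rwa [Finset.card_univ, ZMod.card]
  obtain ⟨y, -, hy⟩ := Finset.exists_mem_notMem_of_card_lt_card hS
  refine ⟨y, fun j z hz hyz => hy (Finset.mem_biUnion.2 ⟨j, Finset.mem_univ _, ?_⟩)⟩
  exact Finset.mem_image.2 ⟨z, Finset.mem_Icc.2 (abs_le.1 hz), by rw [← hyz]; ring⟩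

theorem circulantGraph_one_adj_add_one (hm : m ≠ 1) (x : ZMod m) :
    (circulantGraph ({1} : Set (ZMod m))).Adj x (x + 1) := by
  have h1 : (1 : ZMod m) ≠ 0 := fun h => hm (one_eq_zero_iff.1 h)
  simp [h1]

theorem circulantGraph_one_colorable_two_of_even (h : Even m) :
    (circulantGraph ({1} : Set (ZMod m))).Colorable 2 := by
  let f := castHom (even_iff_two_dvd.1 h) (ZMod 2)
  refine ⟨Coloring.mk (fun x => (f x : Fin 2)) fun {x y} hxy hfxy => ?_⟩
  have hf : f (x - y) = 0 := by rw [map_sub]; exact sub_eq_zero.2 hfxy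
  rw [circulantGraph_adj, Set.mem_singleton_iff, Set.mem_singleton_iff] at hxy
  rcases hxy.2 with h1 | h1
  · rw [h1, map_one] at hf
    exact absurd hf (by decide)
  · rw [← neg_sub, h1, map_neg, map_one] at hf
    exact absurd hf (by decide)

theorem circulantGraph_one_not_colorable_two_of_odd (h : Odd m) (hm : m ≠ 1) :
    ¬(circulantGraph ({1} : Set (ZMod m))).Colorable 2 := by
  rintro ⟨c⟩
  have hadj := circulantGraph_one_adj_add_one hm
  have two_periodic (x : ZMod m) : c (x + 2) = c x := by
    have h₁ := c.valid (hadj x)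
    have h₂ := c.valid (hadj (x + 1))
    rw [add_assoc, one_add_one_eq_two] at h₂
    generalize c x = u at h₁
    generalize c (x + 1) = v at h₁ h₂
    generalize c (x + 2) = w at h₂
    revert u v w
    decide
  have even_periodic (k : ℕ) : c (2 * k) = c 0 := by
    induction k with
    | zero => simp
    | succ k ih => rw [Nat.cast_succ, mul_add_one, two_periodic, ih]
  obtain ⟨j, rfl⟩ := h
  have h_two_inv : (2 * (j + 1 : ℕ) : ZMod (2 * j + 1)) = 1 := by
    have := natCast_self (2 * j + 1)
    push_cast at this ⊢
    linear_combination this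
  have h₁ := even_periodic (j + 1)
  rw [h_two_inv] at h₁
  exact c.valid (hadj 0) (by rw [zero_add]; exact h₁.symm)

def SmallDiffsAgree (t : ℕ) (a : Fin l → ZMod m) (b : Fin l → ZMod n) : Prop :=
  ∀ i j (z : ℤ), |z| ≤ t → (a i - a j = z ↔ b i - b j = z)

namespace SmallDiffsAgree

variable {s t : ℕ} {a : Fin l → ZMod m} {b : Fin l → ZMod n}

theorem symm (h : SmallDiffsAgree t a b) : SmallDiffsAgree t b a :=
  fun i j z hz => (h i j z hz).symm

theorem mono (h : SmallDiffsAgree t a b) (hst : s ≤ t) : SmallDiffsAgree s a b :=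
  fun i j z hz => h i j z (hz.trans (by exact_mod_cast hst))

theorem eq_iff (h : SmallDiffsAgree t a b) (i j : Fin l) : a i = a j ↔ b i = b j := by
  simpa [sub_eq_zero] using h i j 0 (by simp)

theorem adj_iff (h : SmallDiffsAgree t a b) (ht : 1 ≤ t) (i j : Fin l) :
    (circulantGraph {1}).Adj (a i) (a j) ↔ (circulantGraph {1}).Adj (b i) (b j) := by
  have h₁ := h i j 1 (by simpa using ht)
  have h₁' := h j i 1 (by simpa using ht)
  simp only [Int.cast_one] at h₁ h₁'
  simp only [circulantGraph_adj, Set.mem_singleton_iff, h.eq_iff i j, h₁, h₁']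

theorem snoc (h : SmallDiffsAgree t a b) (hm : t < m) (hn : t < n) {x : ZMod m} {y : ZMod n}
    (hxy : ∀ j (z : ℤ), |z| ≤ t → (x - a j = z ↔ y - b j = z)) :
    SmallDiffsAgree t (Fin.snoc a x : Fin (l + 1) → ZMod m) (Fin.snoc b y) := by
  have hyx (j) (z : ℤ) (hz : |z| ≤ t) : a j - x = z ↔ b j - y = z := by
    rw [← neg_sub x, ← neg_sub y, neg_eq_iff_eq_neg, neg_eq_iff_eq_neg, ← Int.cast_neg,
      ← Int.cast_neg]
    exact hxy j (-z) (by rwa [abs_neg])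
  have hxx (z : ℤ) (hz : |z| ≤ t) : (z : ZMod m) = 0 ↔ (z : ZMod n) = 0 := by
    rw [intCast_eq_zero_iff_of_abs_lt (hz.trans_lt (by exact_mod_cast hm)),
      intCast_eq_zero_iff_of_abs_lt (hz.trans_lt (by exact_mod_cast hn))]
  intro i j z hz
  induction i using Fin.lastCases <;> induction j using Fin.lastCases <;>
    simp only [Fin.snoc_last, Fin.snoc_castSucc, sub_self, eq_comm (a := (0 : ZMod _))]
  · exact hxx z hz
  · exact hxy _ z hz
  · exact hyx _ z hz
  · exact h _ _ z hz

/-- A close `x` is copied at the same offset; agreement up to `2 * t` is needed because the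
differences `x - a j` and `a i - a j` then differ by at most `t`. -/
theorem exists_snoc (h : SmallDiffsAgree (2 * t) a b) (hm : t < m) (hn : t < n)
    (hl : l * (2 * t + 1) < n) (x : ZMod m) :
    ∃ y, SmallDiffsAgree t (Fin.snoc a x : Fin (l + 1) → ZMod m) (Fin.snoc b y) := by
  by_cases hx : ∃ (i : Fin l) (z : ℤ), |z| ≤ t ∧ x - a i = z
  · obtain ⟨i, z, hz, hxz⟩ := hx
    refine ⟨b i + z, (h.mono (by omega)).snoc hm hn fun j w hw => ?_⟩
    have hwz : |w - z| ≤ ((2 * t : ℕ) : ℤ) := by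
      push_cast
      linarith [abs_sub w z]
    have hx' : x - a j = z + (a i - a j) := by rw [← hxz]; ring
    rw [hx', show b i + z - b j = z + (b i - b j) by ring, ← eq_sub_iff_add_eq',
      ← eq_sub_iff_add_eq', ← Int.cast_sub, ← Int.cast_sub]
    exact h i j (w - z) hwz
  · push Not at hx
    obtain ⟨y, hy⟩ := exists_forall_sub_ne_of_mul_lt t b hl
    exact ⟨y, (h.mono (by omega)).snoc hm hn fun j w hw => iff_of_false (hx j w hw) (hy j w hw)⟩

end SmallDiffsAgree

end ZMod

open Language

abbrev cycleStructure (m : ℕ) : Language.graph.Structure (ZMod m) :=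
  (circulantGraph ({1} : Set (ZMod m))).structure

attribute [local instance] cycleStructure

theorem lt_of_mul_two_pow_lt {K k l m : ℕ} (hm : K * (2 ^ (K + 1) + 1) < m)
    (hkl : l + (k + 1) ≤ K) : 2 ^ k < m ∧ l * (2 * 2 ^ k + 1) < m := by
  have hpow : 2 * 2 ^ k ≤ 2 ^ (K + 1) := by
    rw [← pow_succ']
    exact Nat.pow_le_pow_right two_pos (by omega)
  have hl : l * (2 * 2 ^ k + 1) ≤ K * (2 ^ (K + 1) + 1) := by
    gcongr
    omega
  constructor <;> nlinarith

def cycleBackAndForthSystem (K m n : ℕ) (hm : K * (2 ^ (K + 1) + 1) < m)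
    (hn : K * (2 ^ (K + 1) + 1) < n) : Language.graph.BackAndForthSystem (ZMod m) (ZMod n) where
  Rel k {l} a b := l + k ≤ K ∧ ZMod.SmallDiffsAgree (2 ^ k) a b
  eq_iff h := h.2.eq_iff
  relMap_iff := by
    rintro k l a b ⟨-, h⟩ _ ⟨⟩ f
    exact h.adj_iff Nat.one_le_two_pow (f 0) (f 1)
  forth := by
    rintro k l a b ⟨hkl, h⟩ x
    obtain ⟨hkm, -⟩ := lt_of_mul_two_pow_lt hm hkl
    obtain ⟨hkn, hln⟩ := lt_of_mul_two_pow_lt hn hkl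
    obtain ⟨y, hy⟩ := (h.mono (pow_succ' 2 k).ge).exists_snoc hkm hkn hln x
    exact ⟨y, by omega, hy⟩
  back := by
    rintro k l a b ⟨hkl, h⟩ y
    obtain ⟨hkm, hlm⟩ := lt_of_mul_two_pow_lt hm hkl
    obtain ⟨hkn, -⟩ := lt_of_mul_two_pow_lt hn hkl
    obtain ⟨x, hx⟩ := (h.symm.mono (pow_succ' 2 k).ge).exists_snoc hkn hkm hlm y
    exact ⟨x, by omega, hx.symm⟩

theorem cycle_realize_sentence_iff {m n : ℕ} (φ : Language.graph.Sentence)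
    (hm : φ.quantifierRank * (2 ^ (φ.quantifierRank + 1) + 1) < m)
    (hn : φ.quantifierRank * (2 ^ (φ.quantifierRank + 1) + 1) < n) :
    ZMod m ⊨ φ ↔ ZMod n ⊨ φ :=
  (cycleBackAndForthSystem _ m n hm hn).realize_sentence_iff φ ⟨(zero_add _).le, nofun⟩

/-- There is no first-order sentence in the language with a single binary relation symbol
that holds in a finite simple graph (viewed as a structure via its adjacency relation)
exactly when the graph is bipartite: finite bipartite graphs are not finitely axiomatizable
modulo finiteness. -/
theorem finite_bipartite_graphs_not_finitely_axiomatizable :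
    ¬∃ φ : Language.graph.Sentence,
      ∀ (V : Type) [Fintype V] (G : SimpleGraph V),
        (@FirstOrder.Language.Sentence.Realize Language.graph V G.structure φ ↔
          G.IsBipartite') := by
  rintro ⟨φ, hφ⟩
  set N := φ.quantifierRank * (2 ^ (φ.quantifierRank + 1) + 1)
  have h_even : (circulantGraph ({1} : Set (ZMod (2 * N + 2)))).IsBipartite' :=
    (ZMod.circulantGraph_one_colorable_two_of_even ⟨N + 1, by ring⟩).isBipartite'
      (ZMod.circulantGraph_one_adj_add_one (by omega) 0)
  have h_odd : (circulantGraph ({1} : Set (ZMod (2 * N + 3)))).IsBipartite' :=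
    (hφ _ _).1 ((cycle_realize_sentence_iff φ (by omega) (by omega)).1 ((hφ _ _).2 h_even))
  exact ZMod.circulantGraph_one_not_colorable_two_of_odd ⟨N + 1, by ring⟩ (by omega)
    h_odd.colorable
end

section
/- There is no first-order sentence φ in the first-order language of groups (one binary function symbol for the group operation, and equality) such that for every finite group G, the structure G satisfies φ if and only if G is a simple group. Equivalently, the class of finite simple groups is not finitely axiomatizable modulo finiteness. -/
open FirstOrder

/-- The arities of the function symbols of the language of groups: a single binary function
symbol (the group operation). -/
def grpFun : ℕ → Type
  | 2 => Unit
  | _ => Empty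

/-- The first-order language of groups: one binary function symbol for the group operation
(and equality), no relation symbols. -/
def grpLang : FirstOrder.Language :=
  ⟨grpFun, fun _ => Empty⟩

/-- The `grpLang`-structure on a type with a multiplication: the binary function symbol is
interpreted as the multiplication. -/
def grpStructure (G : Type*) [Mul G] : grpLang.Structure G where
  funMap {n} f x :=
    match n, f, x with
    | 0, f, _ => f.elim
    | 1, f, _ => f.elim
    | 2, _, x => x 0 * x 1
    | _ + 3, f, _ => f.elim
  RelMap {_} r := r.elim

/-! If a sentence `φ` held in exactly the finite simple groups, then by Łoś's theorem it would
hold in a nonprincipal ultraproduct of the simple groups `ℤ/pₙ` and fail in the corresponding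
ultraproduct of the non-simple groups `ℤ/pₙ²`, where `pₙ → ∞` are primes. But multiplication by
a fixed `k ≠ 0` is eventually bijective on both families, so both ultraproducts are divisible
torsion-free abelian groups, i.e. `ℚ`-vector spaces; both have cardinality `2^ℵ₀`, hence the same
dimension, so they are isomorphic and cannot disagree on `φ`. -/

open Filter Cardinal Function
open FirstOrder.Language

attribute [local instance] grpStructure

universe w

namespace DivisibleHull

theorem coe_surjective {M : Type*} [AddCommMonoid M]
    (hM : ∀ n ≠ 0, Surjective fun m : M => n • m) : Surjective ((↑) : M → DivisibleHull M) := by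
  intro x
  induction x with
  | mk m s =>
    obtain ⟨m', hm'⟩ := hM s s.ne_zero m
    exact ⟨m', mk_eq_mk.2 ⟨1, by simp [hm']⟩⟩

noncomputable def addEquivOfDivisible {M : Type*} [AddCommMonoid M] [IsAddTorsionFree M]
    (hM : ∀ n ≠ 0, Surjective fun m : M => n • m) : M ≃+ DivisibleHull M :=
  AddEquiv.ofBijective (coeAddMonoidHom M) ⟨coe_injective, coe_surjective hM⟩

theorem rank_eq_mk_of_divisible {M : Type*} [AddCommGroup M] [IsAddTorsionFree M]
    (hM : ∀ n ≠ 0, Surjective fun m : M => n • m) (hM₀ : ℵ₀ < #M) :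
    Module.rank ℚ (DivisibleHull M) = #M := by
  have hcard : #(DivisibleHull M) = #M := (mk_congr (addEquivOfDivisible hM).toEquiv).symm
  rw [Module.Free.rank_eq_mk_of_infinite_lt ℚ _ (by simpa [Cardinal.mkRat, hcard] using hM₀),
    hcard]

end DivisibleHull

theorem nonempty_addEquiv_of_divisible {A B : Type w} [AddCommGroup A] [AddCommGroup B]
    [IsAddTorsionFree A] [IsAddTorsionFree B]
    (hA : ∀ n ≠ 0, Surjective fun a : A => n • a) (hB : ∀ n ≠ 0, Surjective fun b : B => n • b)
    (hA₀ : ℵ₀ < #A) (hAB : #A = #B) : Nonempty (A ≃+ B) := by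
  obtain ⟨e⟩ := nonempty_linearEquiv_of_rank_eq <|
    (DivisibleHull.rank_eq_mk_of_divisible hA hA₀).trans <|
      hAB.trans (DivisibleHull.rank_eq_mk_of_divisible hB (hAB ▸ hA₀)).symm
  exact ⟨(DivisibleHull.addEquivOfDivisible hA).trans
    (e.toAddEquiv.trans (DivisibleHull.addEquivOfDivisible hB).symm)⟩

def Equiv.toGrpLangEquiv {M N : Type*} [grpLang.Structure M] [Mul N] (e : M ≃ N)
    (he : ∀ (f : grpLang.Functions 2) (x : Fin 2 → M),
      e (Structure.funMap f x) = e (x 0) * e (x 1)) :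
    M ≃[grpLang] N where
  toEquiv := e
  map_fun' {n} f x :=
    match n, f with
    | 2, f => he f x
  map_rel' r := r.elim

def MulEquiv.toGrpLangEquiv {G H : Type*} [Mul G] [Mul H] (e : G ≃* H) : G ≃[grpLang] H :=
  e.toEquiv.toGrpLangEquiv fun _ x => map_mul e (x 0) (x 1)

namespace Filter.Product

variable {β : ℕ → Type}

theorem mk_le_continuum [∀ n, Countable (β n)] (l : Filter ℕ) : #(l.Product β) ≤ 𝔠 := by
  refine mk_quotient_le.trans ?_
  rw [mk_pi]
  calc prod (fun n => #(β n)) ≤ prod fun _ : ℕ => ℵ₀ :=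
        Cardinal.prod_le_prod _ _ fun n => mk_le_aleph0
    _ = 𝔠 := by rw [prod_const', mk_nat, aleph0_power_aleph0]

/-- A sequence of bits `a` is sent to the class of its prefixes `(a 0, …, a (n-1))`, embedded
in `β n`; two sequences whose prefixes agree infinitely often are equal. -/
theorem continuum_le_mk [∀ n, Finite (β n)] {u : Ultrafilter ℕ} (hu : (u : Filter ℕ) ≤ atTop)
    (hβ : ∀ n, 2 ^ n ≤ Nat.card (β n)) : 𝔠 ≤ #((u : Filter ℕ).Product β) := by
  have hemb (n : ℕ) : Nonempty ((Fin n → Bool) ↪ β n) := by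
    rw [← Cardinal.le_def, ← Nat.cast_card, ← Nat.cast_card, Nat.cast_le]
    simpa using hβ n
  have emb (n : ℕ) := (hemb n).some
  let encode (a : ℕ → Bool) : (u : Filter ℕ).Product β :=
    ((fun n => emb n fun k => a k : ∀ n, β n) : (u : Filter ℕ).Product β)
  have hencode : Injective encode := by
    intro a b hab
    have hfreq : ∃ᶠ n in atTop, (fun k : Fin n => a k) = fun k : Fin n => b k :=
      ((Quotient.eq.1 hab).mono fun n hn => (emb n).injective hn).frequently.filter_mono hu
    funext k
    obtain ⟨n, hkn, hn⟩ := frequently_atTop.1 hfreq (k + 1)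
    exact congrFun hn ⟨k, hkn⟩
  calc 𝔠 = #(ℕ → Bool) := by simp
    _ ≤ _ := mk_le_of_injective hencode

theorem mk_eq_continuum [∀ n, Finite (β n)] {u : Ultrafilter ℕ} (hu : (u : Filter ℕ) ≤ atTop)
    (hβ : ∀ n, 2 ^ n ≤ Nat.card (β n)) : #((u : Filter ℕ).Product β) = 𝔠 :=
  (mk_le_continuum _).antisymm (continuum_le_mk hu hβ)

end Filter.Product

namespace Filter

variable {ι : Type*} (l : Filter ι) (G : ι → Type*) [∀ i, Group (G i)]

def eventuallyOneSubgroup : Subgroup (∀ i, G i) where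
  carrier := {x | ∀ᶠ i in l, x i = 1}
  one_mem' := Eventually.of_forall fun _ => rfl
  mul_mem' {x y} hx hy := by
    filter_upwards [hx, hy] with i hxi hyi
    simp [hxi, hyi]
  inv_mem' {x} hx := by
    filter_upwards [hx] with i hxi
    simp [hxi]

instance : (l.eventuallyOneSubgroup G).Normal :=
  ⟨fun x hx g => by
    filter_upwards [hx] with i hxi
    simp [hxi]⟩

/-- The reduced product `l.Product G`, realised as a quotient group so that it inherits its
group structure from `∀ i, G i`. -/
abbrev ProductGroup := (∀ i, G i) ⧸ l.eventuallyOneSubgroup G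

namespace ProductGroup

variable {l G}

theorem mk_eq_mk_iff {x y : ∀ i, G i} :
    (x : l.ProductGroup G) = y ↔ ∀ᶠ i in l, x i = y i := by
  rw [QuotientGroup.eq]
  exact eventually_congr (Eventually.of_forall fun i => inv_mul_eq_one)

def ultraproductEquiv (u : Ultrafilter ι) :
    (u : Filter ι).Product G ≃[grpLang] (u : Filter ι).ProductGroup G :=
  Equiv.toGrpLangEquiv (N := (u : Filter ι).ProductGroup G)
    (Quotient.congr (Equiv.refl _) fun _ _ => mk_eq_mk_iff.symm.trans Quotient.eq) fun f x => by
      obtain ⟨y, rfl⟩ : ∃ y : Fin 2 → ∀ i, G i, x = fun j => (y j : (u : Filter ι).Product G) :=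
        ⟨fun j => (x j).out, funext fun j => (Quotient.out_eq _).symm⟩
      exact (congrArg _ (Ultraproduct.funMap_cast f y)).trans rfl

theorem pow_bijective {k : ℕ} (hk : ∀ᶠ i in l, Bijective fun g : G i => g ^ k) :
    Bijective fun x : l.ProductGroup G => x ^ k := by
  constructor
  · intro x y hxy
    induction x using QuotientGroup.induction_on
    induction y using QuotientGroup.induction_on
    simp only [← QuotientGroup.mk_pow, mk_eq_mk_iff] at hxy ⊢
    filter_upwards [hxy, hk] with i hi hki
    exact hki.1 hi
  · intro x
    induction x using QuotientGroup.induction_on with | H x =>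
    have hroot (i : ι) : ∃ y : G i, (Bijective fun g : G i => g ^ k) → y ^ k = x i := by
      by_cases hi : Bijective fun g : G i => g ^ k
      · exact (hi.2 (x i)).imp fun y hy _ => hy
      · exact ⟨1, fun h => (hi h).elim⟩
    choose y hy using hroot
    refine ⟨y, ?_⟩
    simp only [← QuotientGroup.mk_pow, mk_eq_mk_iff]
    filter_upwards [hk] with i hki using hy i hki

end ProductGroup

end Filter

namespace Filter.ProductGroup

variable {G H : ℕ → Type} [∀ n, CommGroup (G n)] [∀ n, CommGroup (H n)] {u : Ultrafilter ℕ}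

theorem mk_eq_continuum [∀ n, Finite (G n)] (hu : (u : Filter ℕ) ≤ atTop)
    (hG : ∀ n, 2 ^ n ≤ Nat.card (G n)) : #((u : Filter ℕ).ProductGroup G) = 𝔠 :=
  (mk_congr (ultraproductEquiv u).toEquiv).symm.trans (Filter.Product.mk_eq_continuum hu hG)

theorem pow_bijective_of_coprime (hG : ∀ k ≠ 0, ∀ᶠ n in u, (Nat.card (G n)).Coprime k) {k : ℕ}
    (hk : k ≠ 0) : Bijective fun x : (u : Filter ℕ).ProductGroup G => x ^ k :=
  pow_bijective ((hG k hk).mono fun _ h => h.pow_left_bijective)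

theorem nonempty_mulEquiv [∀ n, Finite (G n)] [∀ n, Finite (H n)] (hu : (u : Filter ℕ) ≤ atTop)
    (hG : ∀ n, 2 ^ n ≤ Nat.card (G n)) (hH : ∀ n, 2 ^ n ≤ Nat.card (H n))
    (hGk : ∀ k ≠ 0, ∀ᶠ n in u, (Nat.card (G n)).Coprime k)
    (hHk : ∀ k ≠ 0, ∀ᶠ n in u, (Nat.card (H n)).Coprime k) :
    Nonempty ((u : Filter ℕ).ProductGroup G ≃* (u : Filter ℕ).ProductGroup H) := by
  have : IsAddTorsionFree (Additive ((u : Filter ℕ).ProductGroup G)) :=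
    ⟨fun k hk => (pow_bijective_of_coprime hGk hk).1⟩
  have : IsAddTorsionFree (Additive ((u : Filter ℕ).ProductGroup H)) :=
    ⟨fun k hk => (pow_bijective_of_coprime hHk hk).1⟩
  obtain ⟨e⟩ := nonempty_addEquiv_of_divisible (A := Additive ((u : Filter ℕ).ProductGroup G))
    (B := Additive ((u : Filter ℕ).ProductGroup H))
    (fun k hk => (pow_bijective_of_coprime hGk hk).2)
    (fun k hk => (pow_bijective_of_coprime hHk hk).2)
    ((mk_eq_continuum hu hG).symm ▸ aleph0_lt_continuum)
    ((mk_eq_continuum hu hG).trans (mk_eq_continuum hu hH).symm)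
  exact ⟨AddEquiv.toMultiplicative e⟩

end Filter.ProductGroup

theorem Nat.Prime.eventually_coprime {ι : Type*} {l : Filter ι} {p : ι → ℕ}
    (hp : ∀ i, (p i).Prime) (hl : Tendsto p l atTop) {k : ℕ} (hk : k ≠ 0) :
    ∀ᶠ i in l, (p i).Coprime k :=
  (hl.eventually_gt_atTop k).mono fun i hi =>
    (hp i).coprime_iff_not_dvd.2 fun hdvd => (Nat.le_of_dvd (Nat.pos_of_ne_zero hk) hdvd).not_gt hi

theorem Nat.card_multiplicative_zmod (n : ℕ) : Nat.card (Multiplicative (ZMod n)) = n := by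
  rw [Nat.card_congr Multiplicative.toAdd, Nat.card_zmod]

theorem isSimpleGroup_multiplicative_zmod_iff {n : ℕ} [NeZero n] :
    IsSimpleGroup (Multiplicative (ZMod n)) ↔ n.Prime := by
  refine ⟨fun _ => Nat.card_multiplicative_zmod n ▸ IsSimpleGroup.prime_card, fun hn => ?_⟩
  have : Fact n.Prime := ⟨hn⟩
  exact isSimpleGroup_of_prime_card (Nat.card_multiplicative_zmod n)

/-- There is no first-order sentence in the language of groups that holds in a finite group
exactly when the group is simple: finite simple groups are not finitely axiomatizable
modulo finiteness. -/
theorem finite_simple_groups_not_finitely_axiomatizable :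
    ¬∃ φ : grpLang.Sentence,
      ∀ (G : Type) [Fintype G] [Group G],
        (@FirstOrder.Language.Sentence.Realize grpLang G (grpStructure G) φ ↔
          IsSimpleGroup G) := by
  rintro ⟨φ, hφ⟩
  choose p hp_gt hp using fun n => Nat.exists_infinite_primes (2 ^ n + 1)
  have : ∀ n, NeZero (p n) := fun n => ⟨(hp n).ne_zero⟩
  let u := hyperfilter ℕ
  have hp_tendsto : Tendsto p u atTop :=
    (tendsto_atTop_mono (fun n => (Nat.lt_two_pow_self.trans (hp_gt n)).le) tendsto_id).mono_left
      Nat.hyperfilter_le_atTop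
  have hcop (k : ℕ) (hk : k ≠ 0) := Nat.Prime.eventually_coprime hp hp_tendsto hk
  obtain ⟨e⟩ := Filter.ProductGroup.nonempty_mulEquiv (G := fun n => Multiplicative (ZMod (p n)))
    (H := fun n => Multiplicative (ZMod (p n ^ 2))) Nat.hyperfilter_le_atTop
    (fun n => by simp only [Nat.card_multiplicative_zmod]; linarith [hp_gt n])
    (fun n => by simp only [Nat.card_multiplicative_zmod]; nlinarith [hp_gt n])
    (fun k hk => by simpa only [Nat.card_multiplicative_zmod] using hcop k hk)
    (fun k hk => by
      simpa only [Nat.card_multiplicative_zmod] using (hcop k hk).mono fun n h => h.pow_left 2)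
  have h₁ : (u : Filter ℕ).Product (fun n => Multiplicative (ZMod (p n))) ⊨ φ :=
    (Ultraproduct.sentence_realize φ).2 <| Eventually.of_forall fun n =>
      (hφ _).2 (isSimpleGroup_multiplicative_zmod_iff.2 (hp n))
  have h₂ : ¬ (u : Filter ℕ).Product (fun n => Multiplicative (ZMod (p n ^ 2))) ⊨ φ := fun h =>
    let ⟨n, hn⟩ := ((Ultraproduct.sentence_realize φ).1 h).exists
    Nat.Prime.not_prime_pow le_rfl (isSimpleGroup_multiplicative_zmod_iff.1 ((hφ _).1 hn))
  exact h₂ ((StrongHomClass.realize_sentence ((Filter.ProductGroup.ultraproductEquiv u).symm.comp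
    (e.toGrpLangEquiv.comp (Filter.ProductGroup.ultraproductEquiv u))) φ).1 h₁)
end

section
/- There is no first-order sentence φ in the first-order language with a single binary relation symbol ≤ (and equality) such that for every finite distributive lattice D, the partially ordered set J(D) of join-irreducible elements of D satisfies φ if and only if D satisfies the Bipartite Maximal Elements Property. -/
open FirstOrder

section LatticeDefs

variable {α : Type*} [Lattice α] [OrderBot α]

/-- An element of a lattice with least element `⊥` is *join-irreducible* if it is not the
least element and `x = y ⊔ z` implies `x = y` or `x = z`. -/
def JoinIrred (x : α) : Prop :=
  x ≠ ⊥ ∧ ∀ y z : α, x = y ⊔ z → x = y ∨ x = z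

variable (α) in
/-- The set of maximal elements of the poset of join-irreducible elements. -/
def maxJI : Set α :=
  {a | JoinIrred a ∧ ∀ b : α, JoinIrred b → a ≤ b → a = b}

/-- `c` is covered by `a` in the poset of join-irreducible elements. -/
def JCovBy (c a : α) : Prop :=
  JoinIrred c ∧ JoinIrred a ∧ c < a ∧ ∀ d : α, JoinIrred d → c < d → d < a → False

variable (α) in
/-- The *Two-cover Property*: every join-irreducible element has at most two covers in the
poset of join-irreducible elements. -/
def TwoCoverProperty : Prop :=
  ∀ x y z w : α, JCovBy x y → JCovBy x z → JCovBy x w → y = z ∨ y = w ∨ z = w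

variable (α) in
/-- The *Bipartite Maximal Elements Property*: the set of maximal join-irreducible elements
is the disjoint union of two nonempty subsets such that no two distinct elements of the same
subset have a common lower cover in the poset of join-irreducible elements. -/
def BipartiteMaxElements : Prop :=
  ∃ A B : Set α, A.Nonempty ∧ B.Nonempty ∧ Disjoint A B ∧ A ∪ B = maxJI α ∧
    (∀ a ∈ A, ∀ b ∈ A, a ≠ b → ¬∃ c : α, JCovBy c a ∧ JCovBy c b) ∧
    (∀ a ∈ B, ∀ b ∈ B, a ≠ b → ¬∃ c : α, JCovBy c a ∧ JCovBy c b)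

/-- A *cyclic element*: the join of pairwise distinct maximal join-irreducible elements
`a 0, …, a (n-1)` (`n ≥ 3`) such that for `i < j`, some join-irreducible element lies below
both `a i` and `a j` if and only if `j = i + 1` or `(i, j) = (0, n - 1)`. -/
def IsCyclicElem (x : α) : Prop :=
  ∃ n : ℕ, 3 ≤ n ∧ ∃ a : Fin n → α, Function.Injective a ∧ (∀ i, a i ∈ maxJI α) ∧
    x = Finset.univ.sup a ∧
    ∀ i j : Fin n, i < j →
      ((∃ c : α, JoinIrred c ∧ c ≤ a i ∧ c ≤ a j) ↔
        ((j : ℕ) = (i : ℕ) + 1 ∨ ((i : ℕ) = 0 ∧ (j : ℕ) = n - 1)))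

/-- A *V-set* of `x`: a two-element subset of `maxJI α ∩ ↓x` whose two elements have a
common join-irreducible lower bound. -/
def IsVSet (x : α) (S : Set α) : Prop :=
  ∃ a₀ a₁ : α, a₀ ≠ a₁ ∧ S = {a₀, a₁} ∧ a₀ ∈ maxJI α ∧ a₁ ∈ maxJI α ∧ a₀ ≤ x ∧ a₁ ≤ x ∧
    ∃ c : α, JoinIrred c ∧ c ≤ a₀ ∧ c ≤ a₁

/-- A *W-set* of `x`: a four-element subset `{a 0, a 1, a 2, a 3}` of `maxJI α ∩ ↓x` such
that for `i < j`, some join-irreducible element lies below both `a i` and `a j` if and only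
if `j = i + 1`. -/
def IsWSet (x : α) (S : Set α) : Prop :=
  ∃ a : Fin 4 → α, Function.Injective a ∧ S = Set.range a ∧
    (∀ i, a i ∈ maxJI α ∧ a i ≤ x) ∧
    ∀ i j : Fin 4, i < j →
      ((∃ c : α, JoinIrred c ∧ c ≤ a i ∧ c ≤ a j) ↔ (j : ℕ) = (i : ℕ) + 1)

/-- A *VW-element*: a nonzero element `x` which is the join of `maxJI α ∩ ↓x`, such that
each element of `maxJI α ∩ ↓x` either belongs to a unique V-set of `x` and to no W-set of
`x`, or belongs to a unique W-set of `x` and to no V-set of `x`. -/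
def IsVWElem (x : α) : Prop :=
  x ≠ ⊥ ∧ IsLUB (maxJI α ∩ Set.Iic x) x ∧
    ∀ y ∈ maxJI α ∩ Set.Iic x,
      ((∃! S : Set α, IsVSet x S ∧ y ∈ S) ∧ ¬∃ S : Set α, IsWSet x S ∧ y ∈ S) ∨
      ((∃! S : Set α, IsWSet x S ∧ y ∈ S) ∧ ¬∃ S : Set α, IsVSet x S ∧ y ∈ S)

variable (α) in
/-- The *Decomposable Cyclic Elements Property*: each cyclic element `x` is the join of two
VW-elements `y`, `z` with `maxJI α ∩ ↓y ∩ ↓z = ∅`. -/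
def DecomposableCyclicElements : Prop :=
  ∀ x : α, IsCyclicElem x →
    ∃ y z : α, IsVWElem y ∧ IsVWElem z ∧ x = y ⊔ z ∧
      maxJI α ∩ Set.Iic y ∩ Set.Iic z = ∅

end LatticeDefs

/-!
By Birkhoff's theorem `J(LowerSet P) ≃o P` for a finite poset `P`, so it suffices to exhibit two
finite posets that satisfy the same sentences of a given quantifier depth `q` while exactly one
of their lattices of lower sets has the Bipartite Maximal Elements Property. Take the crowns
with `2 M` and `2 (M + 1)` elements, `M = 2 (2 · 2 ^ q + 1)`. Their maximal elements form a
cycle of length `M`, resp. `M + 1`, under "having a common lower cover", and such a cycle splits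
into two independent classes exactly when its length is even. On the other hand, an
Ehrenfeucht–Fraïssé argument shows that tuples agreeing on the levels and on all differences of
positions up to `2 ^ q` satisfy the same formulas of depth `q`: in each round the new point is
either copied at the same offset from a nearby old point or placed far from all old points, and
the scale halves.
-/

open FirstOrder.Language Set Function

local notation "J(" D ")" => {x : D // JoinIrred x}

section JoinIrred

variable {D : Type*} [Lattice D] [OrderBot D]

theorem joinIrred_iff_supIrred {x : D} : JoinIrred x ↔ SupIrred x := by
  rw [SupIrred, isMin_iff_eq_bot, JoinIrred]
  exact and_congr_right fun _ => ⟨fun h _ _ hbc => (h _ _ hbc.symm).imp Eq.symm Eq.symm,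
    fun h _ _ hbc => (h hbc.symm).imp Eq.symm Eq.symm⟩

theorem jCovBy_val_iff {c a : J(D)} : JCovBy c.1 a.1 ↔ c ⋖ a :=
  ⟨fun ⟨_, _, hlt, h⟩ => ⟨hlt, fun d hcd hda => h d d.2 hcd hda⟩,
    fun h => ⟨c.2, a.2, h.lt, fun d hd hcd hda => h.2 (c := ⟨d, hd⟩) hcd hda⟩⟩

theorem exists_jCovBy_val_iff {a b : J(D)} :
    (∃ c, JCovBy c a.1 ∧ JCovBy c b.1) ↔ ∃ c : J(D), c ⋖ a ∧ c ⋖ b :=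
  ⟨fun ⟨c, hca, hcb⟩ => ⟨⟨c, hca.1⟩, jCovBy_val_iff.1 hca, jCovBy_val_iff.1 hcb⟩,
    fun ⟨c, hca, hcb⟩ => ⟨c.1, jCovBy_val_iff.2 hca, jCovBy_val_iff.2 hcb⟩⟩

theorem maxJI_eq_image : maxJI D = Subtype.val '' {a : J(D) | IsMax a} := by
  ext a
  refine ⟨fun ⟨ha, hmax⟩ => ⟨⟨a, ha⟩, fun b hab => (hmax b b.2 hab).ge, rfl⟩, ?_⟩
  rintro ⟨a, ha, rfl⟩
  exact ⟨a.2, fun b hb hab => congrArg Subtype.val ((ha (b := ⟨b, hb⟩) hab).antisymm' hab)⟩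

end JoinIrred

/-- `f` enumerates the maximal elements of `P` along a cycle: two distinct maximal elements have
a common lower cover exactly when they are consecutive. -/
structure IsMaxCycle {P : Type*} [PartialOrder P] {N : ℕ} (f : ZMod N → P) : Prop where
  injective : Injective f
  range_eq : range f = {p | IsMax p}
  exists_covBy_iff : ∀ i j, i ≠ j → ((∃ c, c ⋖ f i ∧ c ⋖ f j) ↔ j = i + 1 ∨ i = j + 1)

theorem IsMaxCycle.comp_orderIso {P Q : Type*} [PartialOrder P] [PartialOrder Q] {N : ℕ}
    {f : ZMod N → P} (hf : IsMaxCycle f) (e : P ≃o Q) : IsMaxCycle (e ∘ f) where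
  injective := e.injective.comp hf.injective
  range_eq := by
    ext q
    rw [range_comp, hf.range_eq]
    exact ⟨fun ⟨p, hp, hpq⟩ => hpq ▸ (e.isMax_apply).2 hp,
      fun hq => ⟨e.symm q, (e.symm.isMax_apply).2 hq, e.apply_symm_apply q⟩⟩
  exists_covBy_iff i j hij := by
    rw [← hf.exists_covBy_iff i j hij, e.surjective.exists]
    simp only [comp_apply, apply_covBy_apply_iff]

theorem ZMod.even_of_forall_add_one_iff_not {N : ℕ} {p : ZMod N → Prop}
    (h : ∀ i, p (i + 1) ↔ ¬p i) : Even N := by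
  have alternate : ∀ k : ℕ, p k ↔ (p 0 ↔ Even k) := by
    intro k
    induction k with
    | zero => simp
    | succ k ih => rw [Nat.cast_succ, h, ih, Nat.even_add_one]; tauto
  have := alternate N
  rw [ZMod.natCast_self] at this
  tauto

section Cycle

variable {D : Type*} [Lattice D] [OrderBot D] {N : ℕ} {f : ZMod N → J(D)}

theorem IsMaxCycle.maxJI_eq_range (hf : IsMaxCycle f) : maxJI D = range fun i => (f i).1 := by
  rw [maxJI_eq_image, ← hf.range_eq, ← range_comp]
  rfl

theorem IsMaxCycle.exists_jCovBy_iff (hf : IsMaxCycle f) {i j : ZMod N} (hij : i ≠ j) :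
    (∃ c, JCovBy c (f i).1 ∧ JCovBy c (f j).1) ↔ j = i + 1 ∨ i = j + 1 := by
  rw [exists_jCovBy_val_iff, hf.exists_covBy_iff i j hij]

theorem IsMaxCycle.bipartiteMaxElements_of_even (hf : IsMaxCycle f) (hN : Even N) :
    BipartiteMaxElements D := by
  let parity : ZMod N →+* ZMod 2 := ZMod.castHom hN.two_dvd (ZMod 2)
  let g i := (f i).1
  have hg : Injective g := Subtype.val_injective.comp hf.injective
  have no_cover : ∀ i j, parity i = parity j → g i ≠ g j → ¬∃ c, JCovBy c (g i) ∧ JCovBy c (g j) := by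
    intro i j hparity hne hc
    have succ_ne : ∀ z : ZMod 2, z + 1 ≠ z := by decide
    rcases (hf.exists_jCovBy_iff (ne_of_apply_ne g hne)).1 hc with rfl | rfl <;>
      rw [map_add, map_one] at hparity
    · exact succ_ne _ hparity.symm
    · exact succ_ne _ hparity
  refine ⟨g '' {i | parity i = 0}, g '' {i | parity i = 1}, ⟨g 0, 0, map_zero parity, rfl⟩,
    ⟨g 1, 1, map_one parity, rfl⟩, ?_, ?_, ?_, ?_⟩
  · refine (disjoint_image_iff hg).2 (Set.disjoint_left.2 fun i h0 h1 => ?_)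
    simp_all
  · rw [← image_union, hf.maxJI_eq_range, ← image_univ]
    congr
    ext i
    simpa using (by decide : ∀ z : ZMod 2, z = 0 ∨ z = 1) (parity i)
  · rintro _ ⟨i, hi, rfl⟩ _ ⟨j, hj, rfl⟩ hne
    exact no_cover i j (hi.trans hj.symm) hne
  · rintro _ ⟨i, hi, rfl⟩ _ ⟨j, hj, rfl⟩ hne
    exact no_cover i j (hi.trans hj.symm) hne

theorem IsMaxCycle.even_of_bipartiteMaxElements (hf : IsMaxCycle f) (hN : 1 < N)
    (h : BipartiteMaxElements D) : Even N := by
  obtain ⟨A, B, -, -, hAB, hunion, hA, hB⟩ := h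
  have : Fact (1 < N) := ⟨hN⟩
  have hsucc : ∀ i : ZMod N, i ≠ i + 1 := fun i h => one_ne_zero (left_eq_add.1 h)
  refine ZMod.even_of_forall_add_one_iff_not (p := fun i => (f i).1 ∈ A) fun i => ?_
  have hmem : ∀ i, (f i).1 ∈ A ∪ B := by
    rw [hunion, hf.maxJI_eq_range]
    exact mem_range_self
  have hne : (f i).1 ≠ (f (i + 1)).1 :=
    fun h => hsucc i (hf.injective (Subtype.val_injective h))
  have hcov := (hf.exists_jCovBy_iff (hsucc i)).2 (Or.inl rfl)
  have not_both_A : ¬((f i).1 ∈ A ∧ (f (i + 1)).1 ∈ A) := fun h => hA _ h.1 _ h.2 hne hcov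
  have not_both_B : ¬((f i).1 ∈ B ∧ (f (i + 1)).1 ∈ B) := fun h => hB _ h.1 _ h.2 hne hcov
  have disjoint_i : (f i).1 ∈ A → (f i).1 ∉ B := fun h => Set.disjoint_left.1 hAB h
  have mem_i := hmem i
  have mem_succ := hmem (i + 1)
  rw [mem_union] at mem_i mem_succ
  tauto

end Cycle

/-- The crown with `2 N` elements: the bottom point `⟨i, false⟩` lies below the top points
`⟨i, true⟩` and `⟨i + 1, true⟩`. -/
@[ext]
structure Crown_s4 (N : ℕ) where
  pos : ZMod N
  top : Bool

namespace Crown_s4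

variable {N : ℕ}

instance : PartialOrder (Crown_s4 N) where
  le x y := x = y ∨ x.top = false ∧ y.top = true ∧ (y.pos - x.pos = 0 ∨ y.pos - x.pos = 1)
  le_refl _ := Or.inl rfl
  le_trans x y z hxy hyz := by
    rcases hxy with rfl | hxy
    · exact hyz
    rcases hyz with rfl | hyz
    · exact Or.inr hxy
    · simp_all
  le_antisymm x y hxy hyx := by
    rcases hxy with rfl | hxy
    · rfl
    rcases hyx with rfl | hyx
    · rfl
    · simp_all

theorem le_iff {x y : Crown_s4 N} :
    x ≤ y ↔ x = y ∨ x.top = false ∧ y.top = true ∧ (y.pos - x.pos = 0 ∨ y.pos - x.pos = 1) :=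
  Iff.rfl

theorem lt_iff {x y : Crown_s4 N} :
    x < y ↔ x.top = false ∧ y.top = true ∧ (y.pos - x.pos = 0 ∨ y.pos - x.pos = 1) := by
  rw [lt_iff_le_and_ne, le_iff]
  constructor
  · rintro ⟨rfl | h, hne⟩
    · exact absurd rfl hne
    · exact h
  · rintro ⟨hx, hy, h⟩
    exact ⟨Or.inr ⟨hx, hy, h⟩, by rintro rfl; simp_all⟩

theorem covBy_iff_lt {x y : Crown_s4 N} : x ⋖ y ↔ x < y :=
  ⟨CovBy.lt, fun h => ⟨h, fun _ hxz hzy => by simp_all [lt_iff]⟩⟩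

theorem isMax_iff {x : Crown_s4 N} : IsMax x ↔ x.top = true := by
  refine ⟨fun h => ?_, fun h y hxy => ?_⟩
  · by_contra hx
    exact (h.not_lt (b := ⟨x.pos, true⟩)) (lt_iff.2 ⟨by simpa using hx, rfl, Or.inl (sub_self _)⟩)
  · rcases hxy with rfl | ⟨hx, -⟩
    · exact le_rfl
    · simp_all

theorem isMaxCycle : IsMaxCycle (fun i : ZMod N => (⟨i, true⟩ : Crown_s4 N)) where
  injective _ _ h := congrArg pos h
  range_eq := by
    ext x
    simp only [mem_range, mem_ofPred_eq, isMax_iff]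
    exact ⟨by rintro ⟨i, rfl⟩; rfl, fun h => ⟨x.pos, by ext <;> simp [h]⟩⟩
  exists_covBy_iff i j hij := by
    simp only [covBy_iff_lt, lt_iff, true_and]
    constructor
    · rintro ⟨c, ⟨-, hi | hi⟩, -, hj | hj⟩
      · exact absurd (by linear_combination hi - hj) hij
      · exact Or.inl (by linear_combination hj - hi)
      · exact Or.inr (by linear_combination hi - hj)
      · exact absurd (by linear_combination hi - hj) hij
    · rintro (rfl | rfl)
      · exact ⟨⟨i, false⟩, ⟨rfl, Or.inl (sub_self i)⟩, rfl, Or.inr (add_sub_cancel_left i 1)⟩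
      · exact ⟨⟨j, false⟩, ⟨rfl, Or.inr (add_sub_cancel_left j 1)⟩, rfl, Or.inl (sub_self j)⟩

end Crown_s4

namespace FirstOrder.Language

def BoundedFormula.quantifierDepth {L : Language} {α : Type*} :
    ∀ {n}, L.BoundedFormula α n → ℕ
  | _, .falsum => 0
  | _, .equal _ _ => 0
  | _, .rel _ _ => 0
  | _, .imp φ ψ => max φ.quantifierDepth ψ.quantifierDepth
  | _, .all φ => φ.quantifierDepth + 1

theorem order.exists_term_eq_var {n : ℕ} (t : Language.order.Term (Empty ⊕ Fin n)) :
    ∃ i, t = Term.var (Sum.inr i) := by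
  rcases t with (e | i) | ⟨f, _⟩
  · exact e.elim
  · exact ⟨i, rfl⟩
  · exact isEmptyElim f

end FirstOrder.Language

theorem ZMod.intCast_eq_zero_iff_of_abs_lt_s4 {N : ℕ} {d : ℤ} (h : |d| < N) :
    (d : ZMod N) = 0 ↔ d = 0 := by
  rw [ZMod.intCast_zmod_eq_zero_iff_dvd]
  exact ⟨fun hd => Int.eq_zero_of_abs_lt_dvd hd h, fun hd => hd ▸ dvd_zero _⟩

theorem ZMod.exists_forall_sub_ne {M n : ℕ} [NeZero M] (v : Fin n → ZMod M) (s : ℕ)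
    (h : n * (2 * s + 1) < M) : ∃ q : ZMod M, ∀ i (d : ℤ), |d| ≤ s → q - v i ≠ d := by
  classical
  let near := (Finset.univ ×ˢ Finset.Icc (-(s : ℤ)) s).image fun p : Fin n × ℤ => v p.1 + p.2
  have hcard : near.card < (Finset.univ : Finset (ZMod M)).card :=
    calc near.card ≤ (Finset.univ ×ˢ Finset.Icc (-(s : ℤ)) s).card := Finset.card_image_le
      _ = n * (2 * s + 1) := by
        simp only [Finset.card_product, Finset.card_univ, Fintype.card_fin, Int.card_Icc,
          sub_neg_eq_add, mul_eq_mul_left_iff]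
        omega
      _ < M := h
      _ = _ := by rw [Finset.card_univ, ZMod.card]
  obtain ⟨q, -, hq⟩ := Finset.exists_mem_notMem_of_card_lt_card hcard
  refine ⟨q, fun i d hd hqd => hq (Finset.mem_image.2 ⟨(i, d), ?_, ?_⟩)⟩
  · simpa using abs_le.1 hd
  · simp [← hqd]

theorem ZMod.exists_sub_eq_iff_sub_eq {M M' n s : ℕ} [NeZero M'] {u : Fin n → ZMod M}
    {v : Fin n → ZMod M'} (huv : ∀ i j (d : ℤ), |d| ≤ 2 * s → (u j - u i = d ↔ v j - v i = d))
    (hM' : n * (2 * s + 1) < M') (p : ZMod M) :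
    ∃ q : ZMod M', ∀ i (d : ℤ), |d| ≤ s → (p - u i = d ↔ q - v i = d) := by
  by_cases hnear : ∃ i₀, ∃ d₀ : ℤ, |d₀| ≤ s ∧ p - u i₀ = d₀
  · obtain ⟨i₀, d₀, hd₀, hp⟩ := hnear
    refine ⟨v i₀ + d₀, fun i d hd => ?_⟩
    have huv₀ := huv i₀ i (d₀ - d) ((abs_sub _ _).trans (by omega))
    push_cast at huv₀
    constructor
    · intro h
      linear_combination -huv₀.1 (by linear_combination hp - h)
    · intro h
      linear_combination hp - huv₀.2 (by linear_combination -h)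
  · push Not at hnear
    obtain ⟨q, hq⟩ := ZMod.exists_forall_sub_ne v s hM'
    exact ⟨q, fun i d hd => iff_of_false (hnear i d hd) (hq i d hd)⟩

namespace Crown_s4

variable {M M' : ℕ}

instance [NeZero M] : Fintype (Crown_s4 M) :=
  Fintype.ofEquiv (ZMod M × Bool)
    ⟨fun p => ⟨p.1, p.2⟩, fun x => (x.pos, x.top), fun _ => rfl, fun _ => rfl⟩

instance : Language.order.Structure (Crown_s4 M) := Language.orderStructure _

instance : Language.order.OrderedStructure (Crown_s4 M) := ⟨fun _ => Iff.rfl⟩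

theorem eq_iff_sub {x y : Crown_s4 M} : x = y ↔ x.top = y.top ∧ y.pos - x.pos = 0 := by
  rw [sub_eq_zero, Crown_s4.ext_iff, and_comm, eq_comm (a := y.pos)]

/-- The invariant of the Ehrenfeucht–Fraïssé game on crowns, at scale `s`. -/
structure Similar (s : ℕ) {n : ℕ} (x : Fin n → Crown_s4 M) (y : Fin n → Crown_s4 M') : Prop where
  top_eq : ∀ i, (x i).top = (y i).top
  sub_eq_iff : ∀ i j (d : ℤ), |d| ≤ s → ((x j).pos - (x i).pos = d ↔ (y j).pos - (y i).pos = d)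

namespace Similar

variable {s n : ℕ} {x : Fin n → Crown_s4 M} {y : Fin n → Crown_s4 M'}

theorem symm (h : Similar s x y) : Similar s y x :=
  ⟨fun i => (h.top_eq i).symm, fun i j d hd => (h.sub_eq_iff i j d hd).symm⟩

theorem eq_iff (h : Similar s x y) (i j : Fin n) : x i = x j ↔ y i = y j := by
  rw [eq_iff_sub, eq_iff_sub, h.top_eq, h.top_eq]
  simpa using and_congr_right' (h.sub_eq_iff i j 0 (by simp))

theorem le_iff (h : Similar s x y) (hs : 1 ≤ s) (i j : Fin n) : x i ≤ x j ↔ y i ≤ y j := by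
  have h₀ := h.sub_eq_iff i j 0 (by simp)
  have h₁ := h.sub_eq_iff i j 1 (by simpa using hs)
  push_cast at h₀ h₁
  rw [Crown_s4.le_iff, Crown_s4.le_iff, h.eq_iff, h.top_eq, h.top_eq, h₀, h₁]

theorem exists_snoc [NeZero M'] {t : ℕ} (h : Similar s x y) (hts : 2 * t ≤ s) (hM : t < M)
    (hM' : t < M') (hn : n * (2 * t + 1) < M') (a : Crown_s4 M) :
    ∃ b, Similar t (Fin.snoc x a : Fin (n + 1) → Crown_s4 M) (Fin.snoc y b) := by
  obtain ⟨q, hq⟩ := ZMod.exists_sub_eq_iff_sub_eq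
    (fun i j d hd => h.sub_eq_iff i j d (hd.trans (by exact_mod_cast hts))) hn a.pos
  refine ⟨⟨q, a.top⟩, fun i => ?_, fun i j d hd => ?_⟩
  · cases i using Fin.lastCases <;> simp [h.top_eq]
  cases i using Fin.lastCases <;> cases j using Fin.lastCases <;>
    simp only [Fin.snoc_last, Fin.snoc_castSucc]
  case last.last =>
    rw [sub_self, sub_self, eq_comm, ZMod.intCast_eq_zero_iff_of_abs_lt_s4 (by omega),
      eq_comm (a := (0 : ZMod M')), ZMod.intCast_eq_zero_iff_of_abs_lt_s4 (by omega)]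
  case last.cast j =>
    have hqj := hq j (-d) (by rwa [abs_neg])
    push_cast at hqj
    constructor
    · intro h'
      linear_combination -hqj.1 (by linear_combination -h')
    · intro h'
      linear_combination -hqj.2 (by linear_combination -h')
  case cast.last i => exact hq i d hd
  case cast.cast i j => exact h.sub_eq_iff i j d (hd.trans (by omega))

end Similar

variable [NeZero M] [NeZero M']

open BoundedFormula in
theorem realize_iff_of_similar {n : ℕ} (φ : Language.order.BoundedFormula Empty n) {s : ℕ}
    (hs : 2 ^ φ.quantifierDepth ≤ s) (hM : (n + 2) * (2 * s + 1) ≤ M)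
    (hM' : (n + 2) * (2 * s + 1) ≤ M') {x : Fin n → Crown_s4 M} {y : Fin n → Crown_s4 M'}
    (h : Similar s x y) : φ.Realize default x ↔ φ.Realize default y := by
  induction φ generalizing s with
  | falsum => rfl
  | equal t₁ t₂ =>
    obtain ⟨i, rfl⟩ := order.exists_term_eq_var t₁
    obtain ⟨j, rfl⟩ := order.exists_term_eq_var t₂
    exact h.eq_iff i j
  | rel R ts =>
    cases R
    obtain ⟨i, hi⟩ := order.exists_term_eq_var (ts 0)
    obtain ⟨j, hj⟩ := order.exists_term_eq_var (ts 1)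
    change (ts 0).realize _ ≤ (ts 1).realize _ ↔ (ts 0).realize _ ≤ (ts 1).realize _
    rw [hi, hj]
    exact h.le_iff (Nat.one_le_two_pow.trans hs) i j
  | imp φ ψ ihφ ihψ =>
    have hφ : 2 ^ φ.quantifierDepth ≤ s :=
      (Nat.pow_le_pow_right two_pos (le_max_left _ _)).trans hs
    have hψ : 2 ^ ψ.quantifierDepth ≤ s :=
      (Nat.pow_le_pow_right two_pos (le_max_right _ _)).trans hs
    rw [realize_imp, realize_imp, ihφ hφ hM hM' h, ihψ hψ hM hM' h]
  | @all n φ ih =>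
    set t := 2 ^ φ.quantifierDepth
    have hts : 2 * t ≤ s := by rw [← pow_succ']; exact hs
    have ht : 1 ≤ t := Nat.one_le_two_pow
    have room : (n + 1 + 2) * (2 * t + 1) ≤ (n + 2) * (2 * s + 1) := by nlinarith
    rw [realize_all, realize_all]
    constructor
    · intro hx b
      obtain ⟨a, hab⟩ := h.symm.exists_snoc hts (by nlinarith) (by nlinarith) (by nlinarith) b
      exact (ih le_rfl (room.trans hM) (room.trans hM') hab.symm).1 (hx a)
    · intro hy a
      obtain ⟨b, hab⟩ := h.exists_snoc hts (by nlinarith) (by nlinarith) (by nlinarith) a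
      exact (ih le_rfl (room.trans hM) (room.trans hM') hab).2 (hy b)

theorem realize_sentence_iff (φ : Language.order.Sentence) {s : ℕ}
    (hs : 2 ^ φ.quantifierDepth ≤ s) (hM : 2 * (2 * s + 1) ≤ M) (hM' : 2 * (2 * s + 1) ≤ M') :
    Crown_s4 M ⊨ φ ↔ Crown_s4 M' ⊨ φ :=
  realize_iff_of_similar φ hs hM hM' ⟨fun i => i.elim0, fun i => i.elim0⟩

end Crown_s4

noncomputable def joinIrredLowerSetIso (α : Type*) [PartialOrder α] [Finite α] :
    α ≃o J(LowerSet α) :=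
  OrderIso.supIrredLowerSet.trans
    { toEquiv := Equiv.subtypeEquivRight fun _ => joinIrred_iff_supIrred.symm
      map_rel_iff' := Iff.rfl }

theorem realize_joinIrred_lowerSet_iff {α : Type*} [PartialOrder α] [Finite α]
    [Language.order.Structure α] [Language.order.OrderedStructure α] (φ : Language.order.Sentence) :
    @Sentence.Realize Language.order J(LowerSet α) (Language.orderStructure _) φ ↔ α ⊨ φ := by
  let := Language.orderStructure J(LowerSet α)
  have : Language.order.OrderedStructure J(LowerSet α) := ⟨fun _ => Iff.rfl⟩
  exact (StrongHomClass.realize_sentence (joinIrredLowerSetIso α) φ).symm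

theorem bipartiteMaxElements_lowerSet_crown_iff {N : ℕ} [NeZero N] (hN : 1 < N) :
    BipartiteMaxElements (LowerSet (Crown_s4 N)) ↔ Even N :=
  have hf := Crown_s4.isMaxCycle.comp_orderIso (joinIrredLowerSetIso (Crown_s4 N))
  ⟨hf.even_of_bipartiteMaxElements hN, hf.bipartiteMaxElements_of_even⟩

/-- There is no first-order sentence in the language with a single binary relation symbol
`≤` that is satisfied by the poset of join-irreducible elements of a finite distributive
lattice `D` exactly when `D` satisfies the Bipartite Maximal Elements Property. -/
theorem bipartiteMaxElements_not_expressible_in_joinIrred_poset :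
    ¬∃ φ : Language.order.Sentence,
      ∀ (D : Type) [DistribLattice D] [OrderBot D] [Fintype D],
        (@FirstOrder.Language.Sentence.Realize Language.order {x : D // JoinIrred x}
            (Language.orderStructure {x : D // JoinIrred x}) φ ↔
          BipartiteMaxElements D) := by
  rintro ⟨φ, hφ⟩
  set s := 2 ^ φ.quantifierDepth
  set M := 2 * (2 * s + 1)
  have hM : 1 < M := by omega
  have : NeZero M := ⟨by omega⟩
  have same_theory : Crown_s4 M ⊨ φ ↔ Crown_s4 (M + 1) ⊨ φ :=
    Crown_s4.realize_sentence_iff φ le_rfl le_rfl (by omega)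
  have bipartite_even := (bipartiteMaxElements_lowerSet_crown_iff hM).2 (even_two_mul _)
  have not_bipartite_odd :=
    (bipartiteMaxElements_lowerSet_crown_iff (N := M + 1) (by omega)).not.2
      (Nat.not_even_iff_odd.2 (odd_two_mul_add_one _))
  rw [← hφ, realize_joinIrred_lowerSet_iff] at bipartite_even not_bipartite_odd
  exact not_bipartite_odd (same_theory.1 bipartite_even)
end

section
/- Let D be a finite distributive lattice and let n ≥ 3. If the n-crown K_n is an induced subposet of the poset J(D) of join-irreducible elements of D, then D has at least 18 elements. -/
/-- The underlying set of the `n`-crown `K_n`: `Sum.inl j` is the maximal element `a j` and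
`Sum.inr i` is the minimal element `b i`. -/
structure Crown (n : ℕ) where
  toSum : Fin n ⊕ Fin n

/-- The order of the `n`-crown: `b i ≤ a j` iff `i = j` or `i + 1 ≡ j (mod n)`; these,
together with reflexivity, are the only comparabilities. -/
instance (n : ℕ) : PartialOrder (Crown n) where
  le x y := x = y ∨ ∃ i j : Fin n, x.toSum = Sum.inr i ∧ y.toSum = Sum.inl j ∧
    ((j : ℕ) = (i : ℕ) ∨ (j : ℕ) = ((i : ℕ) + 1) % n)
  le_refl x := Or.inl rfl
  le_trans x y z hxy hyz := by
    rcases hxy with rfl | ⟨i, j, hx, hy, hij⟩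
    · exact hyz
    · rcases hyz with rfl | ⟨i', j', hy', _, _⟩
      · exact Or.inr ⟨i, j, hx, hy, hij⟩
      · rw [hy] at hy'; exact absurd hy' (by simp)
  le_antisymm x y hxy hyx := by
    rcases hxy with rfl | ⟨i, j, hx, hy, _⟩
    · rfl
    · rcases hyx with h | ⟨i', j', hy', hx', _⟩
      · exact h.symm
      · rw [hx] at hx'; exact absurd hx' (by simp)

/-!
By Birkhoff's representation theorem `D` is isomorphic to the lattice of down-sets of `J(D)`, and
a down-set of an induced subposet `P ⊆ J(D)` is recovered from its down-closure in `J(D)`, so `D`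
has at least as many elements as `P` has down-sets. Collapsing every `a j`, `b i` of `K_n` with
index `≥ 2` onto `a 2`, `b 2` is a monotone surjection `K_n → K_3`, so pulling back embeds the
down-sets of `K_3` into those of `K_n`; and `K_3` has 18 down-sets.
-/

open Function

section LowerSetCard

variable {α β : Type*} [Preorder α] [Preorder β]

lemma OrderEmbedding.preimage_lowerClosure_image (e : α ↪o β) (s : LowerSet α) :
    e ⁻¹' (lowerClosure (e '' s) : Set β) = s := by
  ext a
  simp only [Set.mem_preimage, SetLike.mem_coe, mem_lowerClosure, Set.exists_mem_image,
    e.le_iff_le]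
  exact ⟨fun ⟨b, hb, hab⟩ => s.lower hab hb, fun ha => ⟨a, ha, le_rfl⟩⟩

lemma OrderEmbedding.card_lowerSet_le [Finite β] (e : α ↪o β) :
    Nat.card (LowerSet α) ≤ Nat.card (LowerSet β) :=
  Nat.card_le_card_of_injective (fun s => lowerClosure (e '' s)) fun s t hst =>
    SetLike.coe_injective <| by
      simpa only [e.preimage_lowerClosure_image] using
        congrArg (fun u : LowerSet β => e ⁻¹' (u : Set β)) hst

lemma Monotone.card_lowerSet_le_of_surjective [Finite α] {f : α → β} (hf : Monotone f)
    (hsurj : Surjective f) : Nat.card (LowerSet β) ≤ Nat.card (LowerSet α) :=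
  Nat.card_le_card_of_injective (fun t => ⟨f ⁻¹' t, t.lower.preimage hf⟩) fun _ _ hst =>
    SetLike.coe_injective <| Set.preimage_injective.mpr hsurj (congrArg SetLike.coe hst)

end LowerSetCard

lemma joinIrred_iff_supIrred_s11 {α : Type*} [Lattice α] [OrderBot α] {x : α} :
    JoinIrred x ↔ SupIrred x := by
  refine and_congr (not_congr isMin_iff_eq_bot).symm (forall₂_congr fun y z => ?_)
  rw [eq_comm, @eq_comm _ x y, @eq_comm _ x z]

lemma card_lowerSet_le_card_of_orderEmbedding_joinIrred {P D : Type*} [PartialOrder P]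
    [DistribLattice D] [OrderBot D] [Fintype D] (e : P ↪o {x : D // JoinIrred x}) :
    Nat.card (LowerSet P) ≤ Fintype.card D := by
  classical
  let e' : P ↪o {x : D // SupIrred x} :=
    OrderEmbedding.ofMapLEIff (fun p => ⟨e p, joinIrred_iff_supIrred_s11.mp (e p).2⟩)
      fun _ _ => e.le_iff_le
  calc Nat.card (LowerSet P) ≤ Nat.card (LowerSet {x : D // SupIrred x}) := e'.card_lowerSet_le
    _ = Fintype.card D := by
      rw [← Nat.card_eq_fintype_card, ← Nat.card_congr OrderIso.lowerSetSupIrred.toEquiv]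

namespace Crown

variable {n : ℕ}

def equivSum (n : ℕ) : Crown n ≃ Fin n ⊕ Fin n where
  toFun := toSum
  invFun := mk
  left_inv _ := rfl
  right_inv _ := rfl

instance : DecidableEq (Crown n) := (equivSum n).decidableEq

instance : Fintype (Crown n) := Fintype.ofEquiv _ (equivSum n).symm

instance : DecidableRel (α := Crown n) (· ≤ ·) := fun x y =>
  decidable_of_iff (x = y ∨ ∃ i j : Fin n, x.toSum = Sum.inr i ∧ y.toSum = Sum.inl j ∧
    ((j : ℕ) = (i : ℕ) ∨ (j : ℕ) = ((i : ℕ) + 1) % n)) Iff.rfl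

lemma eighteen_le_card_lowerSet_three : 18 ≤ Nat.card (LowerSet (Crown 3)) := by
  have hcount :
      Fintype.card {s : Finset (Crown 3) // ∀ a b : Crown 3, b ≤ a → a ∈ s → b ∈ s} = 18 := by
    decide
  rw [← hcount, ← Nat.card_eq_fintype_card]
  exact Nat.card_le_card_of_injective (fun s => ⟨s.1, fun _ _ hba ha => s.2 _ _ hba ha⟩)
    fun _ _ hst => Subtype.ext <| Finset.coe_injective <|
      congrArg (fun u : LowerSet (Crown 3) => (u : Set (Crown 3))) hst

def foldIndex (i : Fin n) : Fin 3 := ⟨min i 2, by omega⟩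

def fold (n : ℕ) (x : Crown n) : Crown 3 := ⟨x.toSum.map foldIndex foldIndex⟩

lemma monotone_fold (hn : 3 ≤ n) : Monotone (fold n) := by
  rintro ⟨x⟩ ⟨y⟩ (hxy | ⟨i, j, rfl, rfl, hij⟩)
  · exact hxy ▸ le_rfl
  refine Or.inr ⟨foldIndex i, foldIndex j, rfl, rfl, ?_⟩
  simp only [foldIndex]
  have hsucc : ((i : ℕ) + 1) % n = if (i : ℕ) + 1 = n then 0 else (i : ℕ) + 1 := by
    split_ifs with h
    · rw [h, Nat.mod_self]
    · exact Nat.mod_eq_of_lt (by omega)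
  simp only [hsucc] at hij
  split_ifs at hij <;> omega

lemma fold_surjective (hn : 3 ≤ n) : Surjective (fold n) := by
  have hidx (k : Fin 3) : foldIndex (⟨k, by omega⟩ : Fin n) = k :=
    Fin.ext (Nat.min_eq_left k.is_le)
  rintro ⟨k | k⟩
  · exact ⟨⟨.inl ⟨k, by omega⟩⟩, by simp [fold, hidx]⟩
  · exact ⟨⟨.inr ⟨k, by omega⟩⟩, by simp [fold, hidx]⟩

end Crown

/-- If for some `n ≥ 3` the `n`-crown is an induced subposet (i.e. the image of an order
embedding) of the poset of join-irreducible elements of a finite distributive lattice `D`,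
then `D` has at least 18 elements. -/
theorem card_ge_18_of_crown_in_joinIrred_poset
    (D : Type*) [DistribLattice D] [OrderBot D] [Fintype D]
    (n : ℕ) (hn : 3 ≤ n)
    (h : Nonempty (Crown n ↪o {x : D // JoinIrred x})) :
    18 ≤ Fintype.card D := by
  obtain ⟨e⟩ := h
  calc 18 ≤ Nat.card (LowerSet (Crown 3)) := Crown.eighteen_le_card_lowerSet_three
    _ ≤ Nat.card (LowerSet (Crown n)) :=
      (Crown.monotone_fold hn).card_lowerSet_le_of_surjective (Crown.fold_surjective hn)
    _ ≤ Fintype.card D := card_lowerSet_le_card_of_orderEmbedding_joinIrred e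
end

section
/- Let J_0 = {2, 4, 6, …} and J_1 = {3, 5, 7, …}, and for i ∈ {0,1} let U_i be a nonprincipal ultrafilter on J_i. Then the ultraproducts A_0 = ∏_{n ∈ J_0} K_n / U_0 and A_1 = ∏_{n ∈ J_1} K_n / U_1 of the crowns K_n, taken as structures for the language with one binary relation symbol ≤, are isomorphic partially ordered sets. Moreover, each A_i has cardinality 2^{ℵ_0} and is a cardinal (disjoint) sum of 2^{ℵ_0} copies of the infinite fence. -/
/-- The underlying set of the infinite fence: `Sum.inl s` is the maximal element `a s` and
`Sum.inr j` is the minimal element `b j` (`j, s ∈ ℤ`). -/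
structure Fence where
  toSum : ℤ ⊕ ℤ

/-- The order of the infinite fence: `b j ≤ a s` iff `s = j` or `s = j + 1`; these, together
with reflexivity, are the only comparabilities. -/
instance : PartialOrder Fence where
  le x y := x = y ∨ ∃ j s : ℤ, x.toSum = Sum.inr j ∧ y.toSum = Sum.inl s ∧
    (s = j ∨ s = j + 1)
  le_refl x := Or.inl rfl
  le_trans x y z hxy hyz := by
    rcases hxy with rfl | ⟨i, j, hx, hy, hij⟩
    · exact hyz
    · rcases hyz with rfl | ⟨i', j', hy', _, _⟩
      · exact Or.inr ⟨i, j, hx, hy, hij⟩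
      · rw [hy] at hy'; exact absurd hy' (by simp)
  le_antisymm x y hxy hyx := by
    rcases hxy with rfl | ⟨i, j, hx, hy, _⟩
    · rfl
    · rcases hyx with h | ⟨i', j', hy', hx', _⟩
      · exact h.symm
      · rw [hx] at hx'; exact absurd hx' (by simp)

section UProd

variable {ι : Type*} (U : Ultrafilter ι) (M : ι → Type*)

/-- Two elements of the direct product are equivalent if they agree on a set belonging to
the ultrafilter. -/
def uprodSetoid : Setoid (∀ i, M i) where
  r f g := {i | f i = g i} ∈ (U : Filter ι)
  iseqv := by
    refine ⟨fun f => ?_, fun {f g} h => ?_, fun {f g h} h₁ h₂ => ?_⟩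
    · simp
    · exact Filter.mem_of_superset h fun i hi => hi.symm
    · exact Filter.mem_of_superset (Filter.inter_mem h₁ h₂) fun i hi => hi.1.trans hi.2

/-- The ultraproduct of the family `M` modulo the ultrafilter `U`. -/
def UProd : Type _ := Quotient (uprodSetoid U M)

/-- The relation induced on the ultraproduct by a family of binary relations: it holds iff
it holds coordinatewise on a set belonging to the ultrafilter. -/
def UProd.rel (r : ∀ i, M i → M i → Prop) : UProd U M → UProd U M → Prop :=
  Quotient.lift₂ (fun f g => {i | r i (f i) (g i)} ∈ (U : Filter ι))
    (by
      intro f₁ g₁ f₂ g₂ hf hg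
      refine propext ⟨fun h => ?_, fun h => ?_⟩
      · refine Filter.mem_of_superset (Filter.inter_mem (Filter.inter_mem hf hg) h) ?_
        rintro i ⟨⟨ef, eg⟩, hr⟩
        simp only [Set.mem_setOf_eq] at *
        rw [← ef, ← eg]; exact hr
      · refine Filter.mem_of_superset (Filter.inter_mem (Filter.inter_mem hf hg) h) ?_
        rintro i ⟨⟨ef, eg⟩, hr⟩
        simp only [Set.mem_setOf_eq] at *
        rw [ef, eg]; exact hr)

end UProd

/-!
Let `B` be the ultraproduct of the cycles `Fin (n j)` and `σ` the permutation of `B` induced by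
the rotations `i ↦ i + 1`. Reading `K_n` as two copies of `Fin n` (maximal and minimal elements)
with `b_i ≤ a_i` and `b_i ≤ a_{i+1}`, the ultraproduct of the crowns is the same construction on
`(B, σ)`. Since `n j → ∞` along the ultrafilter, `σ` has no periodic points, so `B` is a disjoint
union of `σ`-orbits, each a copy of `(ℤ, +1)`, and on each orbit the construction is the infinite
fence. Finally `#B = 2 ^ ℵ₀` (binary prefixes of length `log₂ (n j)` separate the points of
`ℕ → Fin 2`), hence there are `2 ^ ℵ₀` orbits. None of this depends on the parity of the `n j`.
-/

universe u

open Filter Function Cardinal Equiv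

section CrownRel

variable {X Y C : Type*}

def crownRel (σ : Perm X) : X ⊕ X → X ⊕ X → Prop
  | .inl x, .inl y => x = y
  | .inr x, .inr y => x = y
  | .inr x, .inl y => x = y ∨ σ x = y
  | .inl _, .inr _ => False

def disjointCopies (C : Type*) (r : Y → Y → Prop) (p q : C × Y) : Prop :=
  p.1 = q.1 ∧ r p.2 q.2

def disjointCopiesCongr {C' Y' : Type*} {r : Y → Y → Prop} {s : Y' → Y' → Prop}
    (c : C ≃ C') (f : r ≃r s) : disjointCopies C r ≃r disjointCopies C' s where
  toEquiv := c.prodCongr f.toEquiv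
  map_rel_iff' := by simp [disjointCopies, c.injective.eq_iff, f.map_rel_iff]

def crownRelIsoOfEquiv {σ : Perm X} {τ : Perm Y} (t : X ≃ C × Y)
    (ht : ∀ x, t (σ x) = ((t x).1, τ (t x).2)) :
    crownRel σ ≃r disjointCopies C (crownRel τ) where
  toEquiv := (sumCongr t t).trans (prodSumDistrib C Y Y).symm
  map_rel_iff' := by
    have perm_eq_iff : ∀ x y, σ x = y ↔ (t x).1 = (t y).1 ∧ τ (t x).2 = (t y).2 := fun x y => by
      rw [← t.apply_eq_iff_eq, ht, Prod.ext_iff]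
    rintro (x | x) (y | y) <;>
      simp [crownRel, disjointCopies, and_or_left, ← perm_eq_iff, ← Prod.ext_iff]

end CrownRel

namespace Equiv.Perm

variable {X : Type*} {σ : Perm X}

def IsAperiodic (σ : Perm X) : Prop := ∀ (k : ℤ) (x : X), (σ ^ k) x = x → k = 0

lemma IsAperiodic.bijective_zpow_apply_out (hσ : σ.IsAperiodic) :
    Bijective fun p : Quotient (SameCycle.setoid σ) × ℤ => (σ ^ p.2) p.1.out := by
  constructor
  · rintro ⟨c, k⟩ ⟨c', k'⟩ (h : (σ ^ k) c.out = (σ ^ k') c'.out)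
    have h₁ : SameCycle σ c.out ((σ ^ k') c'.out) := ⟨k, h⟩
    have h₂ : SameCycle σ c'.out ((σ ^ k') c'.out) := ⟨k', rfl⟩
    obtain rfl : c = c' := Quotient.out_equiv_out.mp (h₁.trans h₂.symm)
    have := hσ (k - k') ((σ ^ k') c.out) (by rw [← mul_apply, ← zpow_add, sub_add_cancel, h])
    rw [sub_eq_zero.mp this]
  · intro x
    obtain ⟨k, hk⟩ := Quotient.mk_out (s := SameCycle.setoid σ) x
    exact ⟨(⟦x⟧, k), hk⟩

noncomputable def IsAperiodic.equivOrbitsProdInt (hσ : σ.IsAperiodic) :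
    X ≃ Quotient (SameCycle.setoid σ) × ℤ :=
  (Equiv.ofBijective _ hσ.bijective_zpow_apply_out).symm

lemma IsAperiodic.equivOrbitsProdInt_apply_perm (hσ : σ.IsAperiodic) (x : X) :
    hσ.equivOrbitsProdInt (σ x) =
      ((hσ.equivOrbitsProdInt x).1, Equiv.addRight 1 (hσ.equivOrbitsProdInt x).2) := by
  rw [equivOrbitsProdInt, Equiv.symm_apply_eq, Equiv.ofBijective_apply]
  dsimp only [coe_addRight]
  rw [add_comm, zpow_add, zpow_one, mul_apply]
  exact congrArg σ ((Equiv.ofBijective _ hσ.bijective_zpow_apply_out).apply_symm_apply x).symm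

end Equiv.Perm

lemma val_finRotate {m : ℕ} (i : Fin m) : (finRotate m i : ℕ) = (i + 1) % m := by
  rcases m with _ | m
  · exact i.elim0
  · simp [finRotate_apply, Fin.val_add]

lemma natCast_dvd_of_finRotate_zpow_apply_eq_self {m : ℕ} {k : ℤ} {i : Fin m}
    (h : (finRotate m ^ k) i = i) : (m : ℤ) ∣ k := by
  match m, i, h with
  | 1, _, _ => exact one_dvd k
  | p + 2, i, h =>
    have hcyc := (isCycle_finRotate (n := p)).isCycleOn
    rw [← Perm.coe_support_eq_set_support, support_finRotate] at hcyc
    simpa using (hcyc.zpow_apply_eq (Finset.mem_univ i)).mp h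

def prefixCode (s : ℕ → Fin 2) {m : ℕ} (hm : m ≠ 0) : Fin m :=
  Fin.castLE (Nat.pow_log_le_self 2 hm) (finFunctionFinEquiv fun i : Fin (Nat.log 2 m) => s i)

lemma prefixCode_ne {s t : ℕ → Fin 2} {k m : ℕ} (hst : s k ≠ t k) (hm : m ≠ 0)
    (hkm : 2 ^ (k + 1) ≤ m) : prefixCode s hm ≠ prefixCode t hm := by
  intro h
  have hk : k < Nat.log 2 m := Nat.le_log_of_pow_le one_lt_two hkm
  exact hst (congrFun (finFunctionFinEquiv.injective (Fin.castLE_injective _ h)) ⟨k, hk⟩)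

def Crown.relIso (n : ℕ) : ((· ≤ ·) : Crown n → Crown n → Prop) ≃r crownRel (finRotate n) where
  toEquiv := ⟨Crown.toSum, Crown.mk, fun _ => rfl, fun _ => rfl⟩
  map_rel_iff' := by
    rintro ⟨x | x⟩ ⟨y | y⟩ <;>
      simp [crownRel, LE.le, -finRotate_apply, Fin.ext_iff (b := y), val_finRotate, eq_comm]

def Fence.relIso : ((· ≤ ·) : Fence → Fence → Prop) ≃r crownRel (Equiv.addRight (1 : ℤ)) where
  toEquiv := ⟨Fence.toSum, Fence.mk, fun _ => rfl, fun _ => rfl⟩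
  map_rel_iff' := by
    rintro ⟨x | x⟩ ⟨y | y⟩ <;> simp [crownRel, LE.le, eq_comm]

lemma mk_prod_fence_eq_continuum {C : Type*} (h : #C = 𝔠) : #(C × Fence) = 𝔠 := by
  rw [mk_congr ((Equiv.refl C).prodCongr Fence.relIso.toEquiv)]
  simp [h]

namespace UProd

variable {ι : Type*} {U : Ultrafilter ι} {M N : ι → Type*}

variable (U) in
def mk (f : ∀ i, M i) : UProd U M := Quotient.mk (uprodSetoid U M) f

lemma mk_surjective : Surjective (mk U : (∀ i, M i) → UProd U M) := Quotient.mk_surjective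

lemma mk_eq_mk {f g : ∀ i, M i} : mk U f = mk U g ↔ ∀ᶠ i in U, f i = g i := Quotient.eq

lemma rel_mk (r : ∀ i, M i → M i → Prop) (f g : ∀ i, M i) :
    rel U M r (mk U f) (mk U g) ↔ ∀ᶠ i in U, r i (f i) (g i) := Iff.rfl

def map (φ : ∀ i, M i → N i) : UProd U M → UProd U N :=
  Quotient.map (fun f i => φ i (f i)) fun _ _ h => Eventually.mono h fun i hi => congrArg (φ i) hi

@[simp]
lemma map_mk (φ : ∀ i, M i → N i) (f : ∀ i, M i) :
    map φ (mk U f) = mk U fun i => φ i (f i) := rfl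

lemma map_injective {φ : ∀ i, M i → N i} (hφ : ∀ i, Injective (φ i)) :
    Injective (map (U := U) φ) := by
  intro x y h
  obtain ⟨f, rfl⟩ := mk_surjective x
  obtain ⟨g, rfl⟩ := mk_surjective y
  simp only [map_mk, mk_eq_mk] at h ⊢
  exact h.mono fun i hi => hφ i hi

def congr (e : ∀ i, M i ≃ N i) : UProd U M ≃ UProd U N where
  toFun := map fun i => e i
  invFun := map fun i => (e i).symm
  left_inv x := by obtain ⟨f, rfl⟩ := mk_surjective x; simp
  right_inv x := by obtain ⟨f, rfl⟩ := mk_surjective x; simp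

def relIsoCongr {r : ∀ i, M i → M i → Prop} {s : ∀ i, N i → N i → Prop} (e : ∀ i, r i ≃r s i) :
    rel U M r ≃r rel U N s where
  toEquiv := congr fun i => (e i).toEquiv
  map_rel_iff' {x y} := by
    obtain ⟨f, rfl⟩ := mk_surjective x
    obtain ⟨g, rfl⟩ := mk_surjective y
    simp [congr, rel_mk, RelIso.map_rel_iff]

def permHom : (∀ i, Perm (M i)) →* Perm (UProd U M) where
  toFun := congr
  map_one' := Equiv.ext fun x => by obtain ⟨f, rfl⟩ := mk_surjective x; rfl
  map_mul' _ _ := Equiv.ext fun x => by obtain ⟨f, rfl⟩ := mk_surjective x; rfl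

@[simp]
lemma permHom_mk (σ : ∀ i, Perm (M i)) (f : ∀ i, M i) :
    permHom σ (mk U f) = mk U fun i => σ i (f i) := rfl

section Sum

variable [∀ i, Nonempty (M i)] [∀ i, Nonempty (N i)]

lemma bijective_sumElim_map_inl_map_inr :
    Bijective (Sum.elim (map (U := U) fun i => @Sum.inl (M i) (N i))
      (map fun i => @Sum.inr (M i) (N i))) := by
  refine ⟨(map_injective fun _ => Sum.inl_injective).sumElim
    (map_injective fun _ => Sum.inr_injective) fun x y h => ?_, fun x => ?_⟩
  · obtain ⟨f, rfl⟩ := mk_surjective x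
    obtain ⟨g, rfl⟩ := mk_surjective y
    simp [mk_eq_mk, U.neBot.ne] at h
  · obtain ⟨f, rfl⟩ := mk_surjective x
    rcases U.em fun i => (f i).isLeft with hl | hr
    · refine ⟨.inl (mk U fun i => (f i).elim id fun _ => Classical.arbitrary _), ?_⟩
      simp only [Sum.elim_inl, map_mk, mk_eq_mk]
      exact hl.mono fun i hi => by obtain ⟨a, ha⟩ := Sum.isLeft_iff.mp hi; simp [ha]
    · refine ⟨.inr (mk U fun i => (f i).elim (fun _ => Classical.arbitrary _) id), ?_⟩
      simp only [Sum.elim_inr, map_mk, mk_eq_mk]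
      exact hr.mono fun i hi => by
        obtain ⟨a, ha⟩ := Sum.isRight_iff.mp (Sum.not_isLeft.mp hi); simp [ha]

variable (U) in
noncomputable def sumEquiv : UProd U M ⊕ UProd U N ≃ UProd U fun i => M i ⊕ N i :=
  Equiv.ofBijective _ bijective_sumElim_map_inl_map_inr

variable (U) in
noncomputable def crownRelIso {X : ι → Type*} [∀ i, Nonempty (X i)] (σ : ∀ i, Perm (X i)) :
    crownRel (permHom (U := U) σ) ≃r rel U (fun i => X i ⊕ X i) fun i => crownRel (σ i) where
  toEquiv := sumEquiv U
  map_rel_iff' {p q} := by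
    rcases p with x | x <;> rcases q with y | y <;>
      obtain ⟨f, rfl⟩ := mk_surjective x <;> obtain ⟨g, rfl⟩ := mk_surjective y <;>
      simp [sumEquiv, rel_mk, crownRel, mk_eq_mk, Ultrafilter.eventually_or, U.neBot.ne]

end Sum

variable {n : ι → ℕ}

lemma isAperiodic_permHom_finRotate (hn : Tendsto n U atTop) :
    (permHom (U := U) fun i => finRotate (n i)).IsAperiodic := by
  intro k x hx
  obtain ⟨f, rfl⟩ := mk_surjective x
  rw [← map_zpow, permHom_mk, mk_eq_mk] at hx
  obtain ⟨i, hdvd, hlt⟩ := ((hx.mono fun i h => natCast_dvd_of_finRotate_zpow_apply_eq_self h).and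
    (hn.eventually_gt_atTop k.natAbs)).exists
  exact Int.eq_zero_of_dvd_of_natAbs_lt_natAbs hdvd (by simpa using hlt)

lemma mk_fin_eq_continuum [Countable ι] (hpos : ∀ i, 0 < n i) (hn : Tendsto n U atTop) :
    #(UProd U fun i => Fin (n i)) = 𝔠 := by
  apply le_antisymm
  · calc #(UProd U fun i => Fin (n i)) ≤ #(∀ i, Fin (n i)) := mk_quotient_le
      _ ≤ #(ι → ℕ) := mk_le_of_injective fun f g h => funext fun i => Fin.ext (congrFun h i)
      _ ≤ 𝔠 := by
        rw [mk_arrow, ← aleph0_power_aleph0]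
        simpa using power_le_power_left aleph0_ne_zero (mk_le_aleph0 (α := ι))
  · have hinj : Injective fun s : ℕ → Fin 2 => mk U fun i => prefixCode s (hpos i).ne' := by
      intro s t hst
      by_contra hne
      obtain ⟨k, hk⟩ := Function.ne_iff.mp hne
      obtain ⟨i, hi, hki⟩ :=
        ((mk_eq_mk.mp hst).and (hn.eventually_ge_atTop (2 ^ (k + 1)))).exists
      exact prefixCode_ne hk _ hki hi
    simpa using lift_mk_le_lift_mk_of_injective hinj

end UProd

lemma Cardinal.eq_continuum_of_mul_aleph0_eq {a : Cardinal} (h : a * ℵ₀ = 𝔠) : a = 𝔠 := by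
  have ha : ℵ₀ ≤ a := by
    by_contra! ha
    have : a * ℵ₀ ≤ ℵ₀ := by simpa using mul_le_mul' ha.le (le_refl ℵ₀)
    exact (h ▸ this).not_gt aleph0_lt_continuum
  rwa [mul_aleph0_eq ha] at h

lemma Ultrafilter.tendsto_atTop_of_injective {ι : Type*} {U : Ultrafilter ι}
    (hU : ∀ s : Set ι, s.Finite → s ∉ U) {n : ι → ℕ} (hn : Injective n) :
    Tendsto n U atTop := by
  rw [← Nat.cofinite_eq_atTop]
  exact hn.tendsto_cofinite.mono_left fun s hs => compl_notMem_iff.mp (hU _ (mem_cofinite.mp hs))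

theorem exists_relIso_uprod_crown {ι : Type u} [Countable ι] (U : Ultrafilter ι) (n : ι → ℕ)
    (hpos : ∀ i, 0 < n i) (hn : Tendsto n U atTop) :
    ∃ C : Type u, #C = 𝔠 ∧ Nonempty (UProd.rel U (fun i => Crown (n i)) (fun _ u v => u ≤ v) ≃r
      disjointCopies C ((· ≤ ·) : Fence → Fence → Prop)) := by
  have : ∀ i, Nonempty (Fin (n i)) := fun i => ⟨⟨0, hpos i⟩⟩
  have hσ := UProd.isAperiodic_permHom_finRotate (U := U) hn
  refine ⟨_, ?_, ⟨(UProd.relIsoCongr fun i => Crown.relIso (n i)).trans <|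
    (UProd.crownRelIso U _).symm.trans <|
    (crownRelIsoOfEquiv hσ.equivOrbitsProdInt hσ.equivOrbitsProdInt_apply_perm).trans <|
    disjointCopiesCongr (Equiv.refl _) Fence.relIso.symm⟩⟩
  apply eq_continuum_of_mul_aleph0_eq
  rw [← UProd.mk_fin_eq_continuum hpos hn, mk_congr hσ.equivOrbitsProdInt]
  simp

/-- The ultraproducts of the even crowns `K n` (`n ∈ {2, 4, 6, …}`) and of the odd crowns
`K n` (`n ∈ {3, 5, 7, …}`) modulo nonprincipal ultrafilters are isomorphic partially ordered
sets; moreover, each of them has cardinality `2 ^ ℵ₀` and is a cardinal (disjoint) sum of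
`2 ^ ℵ₀` copies of the infinite fence. -/
theorem ultraproducts_of_even_and_odd_crowns
    (U₀ : Ultrafilter {n : ℕ // 2 ≤ n ∧ Even n})
    (U₁ : Ultrafilter {n : ℕ // 3 ≤ n ∧ Odd n})
    (h₀ : ∀ s : Set {n : ℕ // 2 ≤ n ∧ Even n}, s.Finite → s ∉ U₀)
    (h₁ : ∀ s : Set {n : ℕ // 3 ≤ n ∧ Odd n}, s.Finite → s ∉ U₁) :
    (∃ e : UProd U₀ (fun j => Crown j.1) ≃ UProd U₁ (fun j => Crown j.1),
      ∀ x y, UProd.rel U₀ (fun j => Crown j.1) (fun _ u v => u ≤ v) x y ↔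
        UProd.rel U₁ (fun j => Crown j.1) (fun _ u v => u ≤ v) (e x) (e y)) ∧
    Cardinal.mk (UProd U₀ (fun j => Crown j.1)) = Cardinal.continuum ∧
    Cardinal.mk (UProd U₁ (fun j => Crown j.1)) = Cardinal.continuum ∧
    (∃ (ι : Type) (e : UProd U₀ (fun j => Crown j.1) ≃ ι × Fence),
      Cardinal.mk ι = Cardinal.continuum ∧
      ∀ x y, UProd.rel U₀ (fun j => Crown j.1) (fun _ u v => u ≤ v) x y ↔
        ((e x).1 = (e y).1 ∧ (e x).2 ≤ (e y).2)) ∧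
    (∃ (ι : Type) (e : UProd U₁ (fun j => Crown j.1) ≃ ι × Fence),
      Cardinal.mk ι = Cardinal.continuum ∧
      ∀ x y, UProd.rel U₁ (fun j => Crown j.1) (fun _ u v => u ≤ v) x y ↔
        ((e x).1 = (e y).1 ∧ (e x).2 ≤ (e y).2)) := by
  obtain ⟨C₀, hC₀, ⟨e₀⟩⟩ := exists_relIso_uprod_crown U₀ Subtype.val
    (fun j => Nat.zero_lt_of_lt j.2.1)
    (Ultrafilter.tendsto_atTop_of_injective h₀ Subtype.val_injective)
  obtain ⟨C₁, hC₁, ⟨e₁⟩⟩ := exists_relIso_uprod_crown U₁ Subtype.val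
    (fun j => Nat.zero_lt_of_lt j.2.1)
    (Ultrafilter.tendsto_atTop_of_injective h₁ Subtype.val_injective)
  obtain ⟨c⟩ := Cardinal.eq.mp (hC₀.trans hC₁.symm)
  let e := e₀.trans ((disjointCopiesCongr c (RelIso.refl _)).trans e₁.symm)
  exact ⟨⟨e.toEquiv, fun x y => e.map_rel_iff.symm⟩,
    (mk_congr e₀.toEquiv).trans (mk_prod_fence_eq_continuum hC₀),
    (mk_congr e₁.toEquiv).trans (mk_prod_fence_eq_continuum hC₁),
    ⟨C₀, e₀.toEquiv, hC₀, fun x y => e₀.map_rel_iff.symm⟩,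
    ⟨C₁, e₁.toEquiv, hC₁, fun x y => e₁.map_rel_iff.symm⟩⟩
end

section
/- Let D be a finite distributive lattice satisfying the Two-cover Property. Then D satisfies the Decomposable Cyclic Elements Property if and only if for every multicyclic element x of D there exist VW-elements y, z of D such that x = y ∨ z and maxJ(D) ∩ ↓y ∩ ↓z = ∅. -/
section Multicyclic

variable {α : Type*} [Lattice α] [OrderBot α]

/-- The edge relation on maximal join-irreducible elements: `u E v` iff `u ≠ v` and some
join-irreducible element lies below both `u` and `v`. -/
def EdgeRel (u v : α) : Prop :=
  u ≠ v ∧ ∃ c : α, JoinIrred c ∧ c ≤ u ∧ c ≤ v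

/-- A *multicyclic element*: `maxJI α ∩ ↓x` is nonempty, `x` is its join, and in the graph
on `maxJI α ∩ ↓x` with edges given by `EdgeRel`, every vertex has exactly two neighbors. -/
def IsMulticyclic (x : α) : Prop :=
  (maxJI α ∩ Set.Iic x).Nonempty ∧ IsLUB (maxJI α ∩ Set.Iic x) x ∧
    ∀ y ∈ maxJI α ∩ Set.Iic x,
      ∃ u v : α, u ∈ maxJI α ∩ Set.Iic x ∧ v ∈ maxJI α ∩ Set.Iic x ∧ u ≠ v ∧
        EdgeRel y u ∧ EdgeRel y v ∧
        ∀ w ∈ maxJI α ∩ Set.Iic x, EdgeRel y w → w = u ∨ w = v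

end Multicyclic


/-!
The graph `E` on the maximal join-irreducibles below a multicyclic `x` is 2-regular, so each of
its cycles is an induced cycle that no edge of `E` leaves. The join `c` of one of them is cyclic,
and the join of the remaining vertices is again multicyclic, with fewer vertices. Since a
join-irreducible element below `y ⊔ z` lies below `y` or below `z`, V- and W-sets of `y ⊔ z` stay
inside `y` or inside `z` once no edge of `E` joins the two sides; hence VW-decompositions of `c`
and of the rest combine into one of `x`, and induction on the number of vertices finishes. The
converse holds because cyclic elements are multicyclic.
-/

open SimpleGraph

theorem SimpleGraph.Walk.IsCycle.adj_getVert_iff_of_isCycles {V : Type*} {G : SimpleGraph V}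
    [G.LocallyFinite] (hG : G.IsCycles) {u : V} {p : G.Walk u u} (hp : p.IsCycle)
    {i j : ℕ} (hij : i < j) (hj : j < p.length) :
    G.Adj (p.getVert i) (p.getVert j) ↔ j = i + 1 ∨ (i = 0 ∧ j = p.length - 1) := by
  have hlen := hp.three_le_length
  have hinj : ∀ {k l}, k ≤ p.length - 1 → l ≤ p.length - 1 → p.getVert k = p.getVert l → k = l :=
    fun hk hl h => hp.getVert_injOn' hk hl h
  have hlast : p.getVert (p.length - 1 + 1) = p.getVert 0 := by
    rw [Nat.sub_add_cancel (by omega), p.getVert_length, p.getVert_zero]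
  constructor
  · intro hadj
    rw [← hp.adj_toSubgraph_iff_of_isCycles hG
      ((p.mem_verts_toSubgraph).2 (p.getVert_mem_support i)), Walk.toSubgraph_adj_iff] at hadj
    obtain ⟨k, hk, hkn⟩ := hadj
    rcases Sym2.eq_iff.1 hk with ⟨hki, hkj⟩ | ⟨hkj, hki⟩
    · obtain rfl := hinj (by omega) (by omega) hki
      exact Or.inl (hinj (by omega) (by omega) hkj).symm
    · obtain rfl := hinj (by omega) (by omega) hkj
      rcases Nat.lt_or_ge (k + 1) p.length with hk1 | hk1
      · have := hinj (by omega) (by omega) hki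
        omega
      · rw [show k + 1 = p.length - 1 + 1 by omega, hlast] at hki
        have := hinj (by omega) (by omega) hki
        omega
  · rintro (rfl | ⟨rfl, rfl⟩)
    · exact p.adj_getVert_succ (by omega)
    · have := p.adj_getVert_succ (i := p.length - 1) (by omega)
      rw [hlast] at this
      exact this.symm

theorem SimpleGraph.cycleGraph_adj_iff_of_lt {n : ℕ} {i j : Fin n} (hij : i < j) :
    (cycleGraph n).Adj i j ↔ (j : ℕ) = i + 1 ∨ ((i : ℕ) = 0 ∧ (j : ℕ) = n - 1) := by
  rw [cycleGraph_adj', Fin.coe_sub_iff_lt.2 hij, Fin.coe_sub_iff_le.2 hij.le]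
  have : (i : ℕ) < j := hij
  omega

section Lattice

variable {α : Type*} [Lattice α] [OrderBot α]

theorem EdgeRel.symm {u v : α} (h : EdgeRel u v) : EdgeRel v u :=
  ⟨h.1.symm, h.2.imp fun _ ⟨hc, hu, hv⟩ => ⟨hc, hv, hu⟩⟩

theorem edgeRel_comm {u v : α} : EdgeRel u v ↔ EdgeRel v u :=
  ⟨EdgeRel.symm, EdgeRel.symm⟩

/-- The graph `E` on `maxJI α ∩ ↓x`; all other elements of `α` are isolated vertices. -/
def edgeGraphBelow (x : α) : SimpleGraph α where
  Adj u v := u ∈ maxJI α ∩ Set.Iic x ∧ v ∈ maxJI α ∩ Set.Iic x ∧ EdgeRel u v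
  symm := ⟨fun _ _ h => ⟨h.2.1, h.1, h.2.2.symm⟩⟩
  loopless := ⟨fun _ h => h.2.2.1 rfl⟩

theorem IsMulticyclic.isCycles {x : α} (hx : IsMulticyclic x) : (edgeGraphBelow x).IsCycles := by
  rintro y ⟨-, hy, -⟩
  obtain ⟨u, v, hu, hv, huv, hyu, hyv, huniq⟩ := hx.2.2 y hy
  have : (edgeGraphBelow x).neighborSet y = {u, v} := by
    ext w
    simp only [mem_neighborSet, Set.mem_insert_iff, Set.mem_singleton_iff]
    constructor
    · rintro ⟨-, hw, hyw⟩
      exact huniq w hw hyw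
    · rintro (rfl | rfl)
      exacts [⟨hy, hu, hyu⟩, ⟨hy, hv, hyv⟩]
  rw [this, Set.ncard_pair huv]

def IsVWMember (x m : α) : Prop :=
  ((∃! S : Set α, IsVSet x S ∧ m ∈ S) ∧ ¬∃ S : Set α, IsWSet x S ∧ m ∈ S) ∨
    ((∃! S : Set α, IsWSet x S ∧ m ∈ S) ∧ ¬∃ S : Set α, IsVSet x S ∧ m ∈ S)

def EdgeSeparated (y z : α) : Prop :=
  ∀ a ∈ maxJI α ∩ Set.Iic y, ∀ b ∈ maxJI α ∩ Set.Iic z, ¬EdgeRel a b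

theorem EdgeSeparated.symm {y z : α} (h : EdgeSeparated y z) : EdgeSeparated z y :=
  fun a ha b hb hab => h b hb a ha hab.symm

theorem EdgeSeparated.mono {y z y' z' : α} (h : EdgeSeparated y z) (hy : y' ≤ y) (hz : z' ≤ z) :
    EdgeSeparated y' z' :=
  fun a ha b hb => h a ⟨ha.1, ha.2.trans hy⟩ b ⟨hb.1, hb.2.trans hz⟩

def HasVWDecomposition (x : α) : Prop :=
  ∃ y z : α, IsVWElem y ∧ IsVWElem z ∧ x = y ⊔ z ∧ maxJI α ∩ Set.Iic y ∩ Set.Iic z = ∅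

theorem IsVSet.mono {x x' : α} {S : Set α} (h : IsVSet x S) (hx : x ≤ x') : IsVSet x' S := by
  obtain ⟨a₀, a₁, hne, rfl, h₀, h₁, hle₀, hle₁, hc⟩ := h
  exact ⟨a₀, a₁, hne, rfl, h₀, h₁, hle₀.trans hx, hle₁.trans hx, hc⟩

theorem IsWSet.mono {x x' : α} {S : Set α} (h : IsWSet x S) (hx : x ≤ x') : IsWSet x' S := by
  obtain ⟨a, ha, rfl, hmem, hedge⟩ := h
  exact ⟨a, ha, rfl, fun i => ⟨(hmem i).1, (hmem i).2.trans hx⟩, hedge⟩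

end Lattice

section DistribLattice

variable {α : Type*} [DistribLattice α] [OrderBot α]

theorem JoinIrred.supPrime {p : α} (hp : JoinIrred p) : SupPrime p :=
  SupIrred.supPrime ⟨fun h => hp.1 h.eq_bot, fun b c h => (hp.2 b c h.symm).imp Eq.symm Eq.symm⟩

theorem maxJI_inter_Iic_sup (y z : α) :
    maxJI α ∩ Set.Iic (y ⊔ z) = maxJI α ∩ Set.Iic y ∪ maxJI α ∩ Set.Iic z := by
  ext m
  constructor
  · rintro ⟨hm, hle⟩
    exact (hm.1.supPrime.le_sup.1 hle).imp (⟨hm, ·⟩) (⟨hm, ·⟩)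
  · rintro (⟨hm, h⟩ | ⟨hm, h⟩)
    exacts [⟨hm, le_sup_of_le_left h⟩, ⟨hm, le_sup_of_le_right h⟩]

theorem maxJI_inter_Iic_finset_sup {ι : Type*} {s : Finset ι} {f : ι → α}
    (hf : ∀ i ∈ s, f i ∈ maxJI α) : maxJI α ∩ Set.Iic (s.sup f) = f '' s := by
  ext m
  constructor
  · rintro ⟨hm, hle⟩
    obtain ⟨i, hi, hmi⟩ := hm.1.supPrime.le_finset_sup.1 hle
    exact ⟨i, hi, (hm.2 _ (hf i hi).1 hmi).symm⟩
  · rintro ⟨i, hi, rfl⟩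
    exact ⟨hf i hi, Finset.le_sup hi⟩

theorem IsCyclicElem.isMulticyclic {x : α} (hx : IsCyclicElem x) : IsMulticyclic x := by
  obtain ⟨n, hn, a, ha, hmax, rfl, hedge⟩ := hx
  have hadj : ∀ i j, EdgeRel (a i) (a j) ↔ (cycleGraph n).Adj i j := by
    have hlt : ∀ i j, i < j → (EdgeRel (a i) (a j) ↔ (cycleGraph n).Adj i j) := fun i j hij => by
      rw [cycleGraph_adj_iff_of_lt hij, ← hedge i j hij]
      exact and_iff_right (ha.ne hij.ne)
    intro i j
    rcases lt_trichotomy i j with h | rfl | h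
    · exact hlt i j h
    · exact iff_of_false (fun h => h.1 rfl) (cycleGraph n).irrefl
    · rw [edgeRel_comm, (cycleGraph n).adj_comm]
      exact hlt j i h
  obtain ⟨n, rfl⟩ : ∃ m, n = m + 3 := ⟨n - 3, by omega⟩
  have hnbr : ∀ i j, (cycleGraph (n + 3)).Adj i j ↔ j = i - 1 ∨ j = i + 1 := fun i j => by
    rw [← mem_neighborSet, cycleGraph_neighborSet (n := n + 1)]
    rfl
  have hsupp : maxJI α ∩ Set.Iic (Finset.univ.sup a) = Set.range a := by
    rw [maxJI_inter_Iic_finset_sup fun i _ => hmax i, Finset.coe_univ, Set.image_univ]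
  rw [IsMulticyclic, hsupp]
  refine ⟨Set.range_nonempty a, by simpa using Finset.isLUB_sup (s := Finset.univ) (f := a), ?_⟩
  rintro _ ⟨i, rfl⟩
  refine ⟨a (i - 1), a (i + 1), ⟨_, rfl⟩, ⟨_, rfl⟩, ha.ne ?_,
    (hadj _ _).2 ((hnbr _ _).2 (.inl rfl)), (hadj _ _).2 ((hnbr _ _).2 (.inr rfl)), ?_⟩
  · rw [Ne, sub_eq_iff_eq_add, add_assoc, left_eq_add, Fin.ext_iff]
    simp [Fin.val_add, Nat.mod_eq_of_lt (show 2 < n + 3 by omega)]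
  · rintro _ ⟨j, rfl⟩ hij
    exact ((hnbr i j).1 ((hadj i j).1 hij)).imp (congrArg a) (congrArg a)

theorem IsMulticyclic.exists_isCyclicElem_edgeClosed [Finite α] {x : α} (hx : IsMulticyclic x) :
    ∃ c, IsCyclicElem c ∧ c ≤ x ∧
      ∀ a ∈ maxJI α ∩ Set.Iic c, ∀ b ∈ maxJI α ∩ Set.Iic x, EdgeRel a b → b ≤ c := by
  classical
  have := Fintype.ofFinite α
  set G := edgeGraphBelow x
  have hG : G.IsCycles := hx.isCycles
  obtain ⟨s, hs⟩ := hx.1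
  obtain ⟨u, -, hu, -, -, hsu, -⟩ := hx.2.2 s hs
  obtain ⟨p, hp, -⟩ := hG.exists_cycle_toSubgraph_verts_eq_connectedComponentSupp
    (c := G.connectedComponentMk s) rfl ⟨u, hs, hu, hsu⟩
  have hlen := hp.three_le_length
  let a : Fin p.length → α := fun i => p.getVert i
  have ha : ∀ k < p.length, p.getVert k ∈ maxJI α ∩ Set.Iic x := fun k hk =>
    (p.adj_getVert_succ hk).1
  have hinj : Function.Injective a := fun i j h =>
    Fin.ext (hp.getVert_injOn' (by simp; omega) (by simp; omega) h)
  have hle : ∀ k ≤ p.length, p.getVert k ≤ Finset.univ.sup a := by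
    intro k hk
    rcases hk.lt_or_eq with hk | rfl
    · exact Finset.le_sup (f := a) (Finset.mem_univ ⟨k, hk⟩)
    · rw [p.getVert_length]
      exact p.getVert_zero.symm.trans_le (Finset.le_sup (f := a) (Finset.mem_univ ⟨0, by omega⟩))
  refine ⟨Finset.univ.sup a, ⟨p.length, hlen, a, hinj, fun i => (ha i i.2).1, rfl, ?_⟩,
    Finset.sup_le fun i _ => (ha i i.2).2, ?_⟩
  · intro i j hij
    rw [← hp.adj_getVert_iff_of_isCycles hG hij j.2]
    exact ⟨fun hc => ⟨ha i i.2, ha j j.2, hinj.ne hij.ne, hc⟩, fun h => h.2.2.2⟩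
  · rw [maxJI_inter_Iic_finset_sup (f := a) fun i _ => (ha i i.2).1]
    rintro _ ⟨i, -, rfl⟩ b hb hab
    have hi : a i ∈ p.toSubgraph.verts := p.mem_verts_toSubgraph.2 (p.getVert_mem_support i)
    have hib : p.toSubgraph.Adj (a i) b :=
      (hp.adj_toSubgraph_iff_of_isCycles hG hi b).2 ⟨ha i i.2, hb, hab⟩
    obtain ⟨k, rfl, hk⟩ := Walk.mem_support_iff_exists_getVert.1
      (Walk.mem_support_of_adj_toSubgraph hib.symm)
    exact hle k hk

theorem IsMulticyclic.finset_sup_of_edgeClosed {x : α} (hx : IsMulticyclic x) {s : Finset α}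
    (hne : s.Nonempty) (hsub : ↑s ⊆ maxJI α ∩ Set.Iic x)
    (hclosed : ∀ a ∈ s, ∀ b ∈ maxJI α ∩ Set.Iic x, EdgeRel a b → b ∈ s) :
    IsMulticyclic (s.sup id) := by
  have hsupp : maxJI α ∩ Set.Iic (s.sup id) = s := by
    simpa using maxJI_inter_Iic_finset_sup (f := id) fun a ha => (hsub ha).1
  rw [IsMulticyclic, hsupp]
  refine ⟨hne, by simpa using Finset.isLUB_sup (s := s) (f := id), fun y hy => ?_⟩
  obtain ⟨u, v, hu, hv, huv, hyu, hyv, huniq⟩ := hx.2.2 y (hsub hy)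
  exact ⟨u, v, hclosed y hy u hu hyu, hclosed y hy v hv hyv, huv, hyu, hyv,
    fun w hw => huniq w (hsub hw)⟩

theorem IsMulticyclic.exists_sup_eq_of_edgeClosed [Finite α] {x c : α} (hx : IsMulticyclic x)
    (hcx : c ≤ x) (hxc : ¬x ≤ c)
    (hclosed : ∀ a ∈ maxJI α ∩ Set.Iic c, ∀ b ∈ maxJI α ∩ Set.Iic x, EdgeRel a b → b ≤ c) :
    ∃ x', IsMulticyclic x' ∧ x = c ⊔ x' ∧
      maxJI α ∩ Set.Iic x' = (maxJI α ∩ Set.Iic x) \ Set.Iic c := by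
  have hfin := Set.toFinite ((maxJI α ∩ Set.Iic x) \ Set.Iic c)
  set s := hfin.toFinset
  have hsupp : maxJI α ∩ Set.Iic (s.sup id) = (maxJI α ∩ Set.Iic x) \ Set.Iic c := by
    simpa [s] using maxJI_inter_Iic_finset_sup (f := id) fun m hm => (hfin.mem_toFinset.1 hm).1.1
  refine ⟨s.sup id, hx.finset_sup_of_edgeClosed ?_ (fun m hm => (hfin.mem_toFinset.1 hm).1) ?_,
    ?_, hsupp⟩
  · obtain ⟨m, hm, hmx, hmc⟩ : ∃ m ∈ maxJI α, m ≤ x ∧ ¬m ≤ c := by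
      simpa [isLUB_le_iff hx.2.1, upperBounds] using hxc
    exact ⟨m, hfin.mem_toFinset.2 ⟨⟨hm, hmx⟩, hmc⟩⟩
  · intro a ha b hb hab
    have ha' := hfin.mem_toFinset.1 ha
    exact hfin.mem_toFinset.2 ⟨hb, fun hbc => ha'.2 (hclosed b ⟨hb.1, hbc⟩ a ha'.1 hab.symm)⟩
  · refine le_antisymm (hx.2.1.2 fun m hm => ?_) (sup_le hcx (Finset.sup_le fun m hm => ?_))
    · by_cases hmc : m ≤ c
      · exact le_sup_of_le_left hmc
      · exact le_sup_of_le_right (Finset.le_sup (f := id) (hfin.mem_toFinset.2 ⟨hm, hmc⟩))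
    · exact (hfin.mem_toFinset.1 hm).1.2

theorem le_of_edgeRel_of_le_sup {y z a b : α} (hsep : EdgeSeparated y z)
    (ha : a ∈ maxJI α ∩ Set.Iic y) (hb : b ∈ maxJI α) (hbyz : b ≤ y ⊔ z) (hab : EdgeRel a b) :
    b ≤ y :=
  (hb.1.supPrime.le_sup.1 hbyz).resolve_right fun hbz => hsep a ha b ⟨hb, hbz⟩ hab

theorem IsVSet.of_sup {y z m : α} {S : Set α} (hsep : EdgeSeparated y z)
    (h : IsVSet (y ⊔ z) S) (hmS : m ∈ S) (hm : m ≤ y) : IsVSet y S := by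
  obtain ⟨a₀, a₁, hne, rfl, h₀, h₁, hle₀, hle₁, hc⟩ := h
  have h01 : EdgeRel a₀ a₁ := ⟨hne, hc⟩
  rcases hmS with rfl | rfl
  · exact ⟨m, a₁, hne, rfl, h₀, h₁, hm, le_of_edgeRel_of_le_sup hsep ⟨h₀, hm⟩ h₁ hle₁ h01, hc⟩
  · exact ⟨a₀, m, hne, rfl, h₀, h₁, le_of_edgeRel_of_le_sup hsep ⟨h₁, hm⟩ h₀ hle₀ h01.symm, hm, hc⟩

theorem IsWSet.of_sup {y z m : α} {S : Set α} (hsep : EdgeSeparated y z)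
    (h : IsWSet (y ⊔ z) S) (hmS : m ∈ S) (hm : m ≤ y) : IsWSet y S := by
  obtain ⟨a, ha, rfl, hmem, hedge⟩ := h
  obtain ⟨i₀, rfl⟩ := hmS
  have hstep : ∀ i j : Fin 4, (j : ℕ) = i + 1 → (a i ≤ y ↔ a j ≤ y) := by
    intro i j hij
    have hlt : i < j := Fin.lt_def.2 (by omega)
    have hE : EdgeRel (a i) (a j) := ⟨ha.ne hlt.ne, (hedge i j hlt).2 hij⟩
    exact ⟨fun h => le_of_edgeRel_of_le_sup hsep ⟨(hmem i).1, h⟩ (hmem j).1 (hmem j).2 hE,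
      fun h => le_of_edgeRel_of_le_sup hsep ⟨(hmem j).1, h⟩ (hmem i).1 (hmem i).2 hE.symm⟩
  have h01 := hstep 0 1 rfl
  have h12 := hstep 1 2 rfl
  have h23 := hstep 2 3 rfl
  have hall : ∀ i, a i ≤ y ↔ a 0 ≤ y := by
    intro i
    fin_cases i
    exacts [Iff.rfl, h01.symm, (h01.trans h12).symm, (h01.trans (h12.trans h23)).symm]
  exact ⟨a, ha, rfl, fun i => ⟨(hmem i).1, (hall i).2 ((hall i₀).1 hm)⟩, hedge⟩

theorem isVWMember_sup_iff {y z m : α} (hsep : EdgeSeparated y z) (hm : m ≤ y) :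
    IsVWMember (y ⊔ z) m ↔ IsVWMember y m := by
  have hV : ∀ S, IsVSet (y ⊔ z) S ∧ m ∈ S ↔ IsVSet y S ∧ m ∈ S := fun S =>
    ⟨fun ⟨h, hmS⟩ => ⟨h.of_sup hsep hmS hm, hmS⟩, fun ⟨h, hmS⟩ => ⟨h.mono le_sup_left, hmS⟩⟩
  have hW : ∀ S, IsWSet (y ⊔ z) S ∧ m ∈ S ↔ IsWSet y S ∧ m ∈ S := fun S =>
    ⟨fun ⟨h, hmS⟩ => ⟨h.of_sup hsep hmS hm, hmS⟩, fun ⟨h, hmS⟩ => ⟨h.mono le_sup_left, hmS⟩⟩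
  simp only [IsVWMember, hV, hW]

theorem IsVWElem.sup {y z : α} (hy : IsVWElem y) (hz : IsVWElem z) (hsep : EdgeSeparated y z) :
    IsVWElem (y ⊔ z) := by
  refine ⟨fun h => hy.1 (le_bot_iff.1 (h ▸ le_sup_left)), ?_, ?_⟩ <;>
    rw [maxJI_inter_Iic_sup]
  · exact hy.2.1.union hz.2.1
  · rintro m (hm | hm)
    · exact (isVWMember_sup_iff hsep hm.2).2 (hy.2.2 m hm)
    · rw [sup_comm]
      exact (isVWMember_sup_iff hsep.symm hm.2).2 (hz.2.2 m hm)

theorem HasVWDecomposition.sup {x₁ x₂ : α} (h₁ : HasVWDecomposition x₁)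
    (h₂ : HasVWDecomposition x₂) (hdisj : maxJI α ∩ Set.Iic x₁ ∩ Set.Iic x₂ = ∅)
    (hsep : EdgeSeparated x₁ x₂) : HasVWDecomposition (x₁ ⊔ x₂) := by
  obtain ⟨y₁, z₁, hy₁, hz₁, rfl, hd₁⟩ := h₁
  obtain ⟨y₂, z₂, hy₂, hz₂, rfl, hd₂⟩ := h₂
  refine ⟨y₁ ⊔ y₂, z₁ ⊔ z₂, hy₁.sup hy₂ (hsep.mono le_sup_left le_sup_left),
    hz₁.sup hz₂ (hsep.mono le_sup_right le_sup_right), sup_sup_sup_comm _ _ _ _, ?_⟩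
  rw [Set.eq_empty_iff_forall_notMem] at hd₁ hd₂ hdisj ⊢
  rintro m ⟨⟨hm, hy⟩, hz⟩
  rcases hm.1.supPrime.le_sup.1 hy with hy | hy <;>
    rcases hm.1.supPrime.le_sup.1 hz with hz | hz
  · exact hd₁ m ⟨⟨hm, hy⟩, hz⟩
  · exact hdisj m ⟨⟨hm, le_sup_of_le_left hy⟩, le_sup_of_le_right hz⟩
  · exact hdisj m ⟨⟨hm, le_sup_of_le_right hz⟩, le_sup_of_le_left hy⟩
  · exact hd₂ m ⟨⟨hm, hy⟩, hz⟩

theorem IsMulticyclic.hasVWDecomposition [Finite α] (hdce : DecomposableCyclicElements α)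
    {x : α} (hx : IsMulticyclic x) : HasVWDecomposition x := by
  induction hn : (maxJI α ∩ Set.Iic x).ncard using Nat.strong_induction_on generalizing x with
  | _ n ih =>
  obtain ⟨c, hc, hcx, hclosed⟩ := hx.exists_isCyclicElem_edgeClosed
  by_cases hxc : x ≤ c
  · exact le_antisymm hxc hcx ▸ hdce c hc
  obtain ⟨x', hx', rfl, hsupp⟩ := hx.exists_sup_eq_of_edgeClosed hcx hxc hclosed
  have hlt : (maxJI α ∩ Set.Iic x').ncard < n := by
    obtain ⟨m, hm⟩ := hc.isMulticyclic.1
    rw [← hn, hsupp]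
    exact Set.ncard_lt_ncard ((Set.ssubset_iff_of_subset Set.sdiff_subset).2
      ⟨m, ⟨hm.1, le_sup_of_le_left hm.2⟩, fun h => h.2 hm.2⟩)
  refine HasVWDecomposition.sup (hdce c hc) (ih _ hlt hx' rfl) ?_ fun a ha b hb hab => ?_
  · rw [Set.eq_empty_iff_forall_notMem]
    rintro m ⟨hm, hmx'⟩
    exact ((hsupp ▸ ⟨hm.1, hmx'⟩ : m ∈ (maxJI α ∩ Set.Iic (c ⊔ x')) \ Set.Iic c)).2 hm.2
  · have hb' : b ∈ (maxJI α ∩ Set.Iic (c ⊔ x')) \ Set.Iic c := hsupp ▸ hb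
    exact hb'.2 (hclosed a ha b hb'.1 hab)

end DistribLattice

theorem decomposableCyclicElements_iff_multicyclic_decomposition_general
    (D : Type*) [DistribLattice D] [OrderBot D] [Fintype D] :
    DecomposableCyclicElements D ↔
      ∀ x : D, IsMulticyclic x →
        ∃ y z : D, IsVWElem y ∧ IsVWElem z ∧ x = y ⊔ z ∧
          maxJI D ∩ Set.Iic y ∩ Set.Iic z = ∅ :=
  ⟨fun h _ hx => hx.hasVWDecomposition h, fun h x hx => h x hx.isMulticyclic⟩

/-- For a finite distributive lattice satisfying the Two-cover Property, the Decomposable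
Cyclic Elements Property holds if and only if every multicyclic element is the join of two
VW-elements `y`, `z` with `maxJI D ∩ ↓y ∩ ↓z = ∅`. -/
theorem decomposableCyclicElements_iff_multicyclic_decomposition
    (D : Type*) [DistribLattice D] [OrderBot D] [Fintype D]
    (htc : TwoCoverProperty D) :
    DecomposableCyclicElements D ↔
      ∀ x : D, IsMulticyclic x →
        ∃ y z : D, IsVWElem y ∧ IsVWElem z ∧ x = y ⊔ z ∧
          maxJI D ∩ Set.Iic y ∩ Set.Iic z = ∅ :=
  decomposableCyclicElements_iff_multicyclic_decomposition_general D
end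

section
/- Let n ≥ 3 be odd and let D be a finite distributive lattice whose poset J(D) of join-irreducible elements is order-isomorphic to the n-crown K_n. Then D does not satisfy the Bipartite Maximal Elements Property. -/
/-!
The maximal elements `a j` of the crown are arranged in a cycle of length `n` in which
consecutive elements `a j`, `a (j + 1)` share the lower cover `b j`. A bipartition as in the
Bipartite Maximal Elements Property is therefore a proper 2-colouring of this cycle, which
forces the colour to alternate along it; going once around shows that `n` is even.
-/

section Parity

variable {M : Type*} [AddMonoid M] {f : M → Bool} {g : M}

theorem eq_iff_even_of_forall_add_eq_not (hf : ∀ x, f (x + g) = !f x) (x : M) (k : ℕ) :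
    f (x + k • g) = f x ↔ Even k := by
  induction k with
  | zero => simp
  | succ k ih =>
    rw [succ_nsmul, ← add_assoc, hf, Nat.even_add_one, ← ih]
    cases f (x + k • g) <;> cases f x <;> simp

theorem even_of_forall_add_eq_not (hf : ∀ x, f (x + g) = !f x) {n : ℕ} (hn : n • g = 0) :
    Even n := by
  simpa [hn] using eq_iff_even_of_forall_add_eq_not hf 0 n

end Parity

namespace Crown

variable {n : ℕ}

theorem lt_iff_s19 {x y : Crown n} :
    x < y ↔ ∃ i j : Fin n, x.toSum = .inr i ∧ y.toSum = .inl j ∧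
      ((j : ℕ) = i ∨ (j : ℕ) = (i + 1) % n) := by
  refine ⟨fun h => h.le.resolve_left h.ne, fun ⟨i, j, hx, hy, hij⟩ => ?_⟩
  refine lt_of_le_of_ne (Or.inr ⟨i, j, hx, hy, hij⟩) ?_
  rintro rfl
  simp [hx] at hy

theorem isMax_inl (j : Fin n) : IsMax (⟨.inl j⟩ : Crown n) := by
  rintro y (rfl | ⟨i, _, hx, -⟩)
  · rfl
  · simp at hx

theorem inr_covBy_inl {i j : Fin n} (hij : (j : ℕ) = i ∨ (j : ℕ) = (i + 1) % n) :
    (⟨.inr i⟩ : Crown n) ⋖ ⟨.inl j⟩ := by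
  refine ⟨lt_iff_s19.2 ⟨i, j, rfl, rfl, hij⟩, fun d hid hdj => ?_⟩
  obtain ⟨-, k, -, hd, -⟩ := lt_iff_s19.1 hid
  obtain ⟨l, -, hd', -, -⟩ := lt_iff_s19.1 hdj
  simp [hd] at hd'

theorem inr_covBy_inl_self (i : Fin n) : (⟨.inr i⟩ : Crown n) ⋖ ⟨.inl i⟩ :=
  inr_covBy_inl (.inl rfl)

theorem inr_covBy_inl_add_one [NeZero n] (i : Fin n) :
    (⟨.inr i⟩ : Crown n) ⋖ ⟨.inl (i + 1)⟩ :=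
  inr_covBy_inl (.inr (by simp [Fin.val_add]))

end Crown

section JoinIrred

variable {α : Type*} [Lattice α] [OrderBot α]

theorem mem_maxJI_of_isMax {a : {x : α // JoinIrred x}} (ha : IsMax a) : a.1 ∈ maxJI α :=
  ⟨a.2, fun b hb hab => le_antisymm hab (ha (b := ⟨b, hb⟩) hab)⟩

theorem jCovBy_of_covBy {c a : {x : α // JoinIrred x}} (h : c ⋖ a) : JCovBy c.1 a.1 :=
  ⟨c.2, a.2, h.lt, fun d hd hcd hda => h.2 (c := ⟨d, hd⟩) hcd hda⟩

theorem BipartiteMaxElements.exists_coloring (h : BipartiteMaxElements α) :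
    ∃ χ : α → Bool, ∀ a ∈ maxJI α, ∀ a' ∈ maxJI α, a ≠ a' →
      ∀ c, JCovBy c a → JCovBy c a' → χ a' = !χ a := by
  classical
  obtain ⟨A, B, -, -, hdisj, hunion, hA, hB⟩ := h
  refine ⟨fun a => decide (a ∈ A), fun a ha a' ha' hne c hc hc' => ?_⟩
  rw [← hunion] at ha ha'
  rcases ha with ha | ha <;> rcases ha' with ha' | ha'
  · exact (hA a ha a' ha' hne ⟨c, hc, hc'⟩).elim
  · simp [ha, hdisj.notMem_of_mem_right ha']
  · simp [ha', hdisj.notMem_of_mem_right ha]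
  · exact (hB a ha a' ha' hne ⟨c, hc, hc'⟩).elim

end JoinIrred

theorem not_bipartiteMaxElements_of_joinIrred_poset_iso_odd_crown_general
    (n : ℕ) (hn : 3 ≤ n) (hodd : Odd n)
    (D : Type*) [DistribLattice D] [OrderBot D]
    (h : Nonempty ({x : D // JoinIrred x} ≃o Crown n)) :
    ¬BipartiteMaxElements D := by
  intro hbip
  obtain ⟨e⟩ := h
  obtain ⟨χ, hχ⟩ := hbip.exists_coloring
  have : NeZero n := ⟨by omega⟩
  let a : Fin n → D := fun j => (e.symm ⟨.inl j⟩).1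
  let b : Fin n → D := fun j => (e.symm ⟨.inr j⟩).1
  have ha_max (j : Fin n) : a j ∈ maxJI D :=
    mem_maxJI_of_isMax (e.symm.isMax_apply.2 (Crown.isMax_inl j))
  have ha_inj : Function.Injective a := fun i j hij => by
    simpa using e.symm.injective (Subtype.ext hij)
  have hsucc_ne (j : Fin n) : j ≠ j + 1 := by
    rw [ne_eq, left_eq_add, Fin.ext_iff, Fin.val_one', Fin.val_zero, Nat.mod_eq_of_lt (by omega)]
    exact one_ne_zero
  have hcov (j k : Fin n) (h : (⟨.inr j⟩ : Crown n) ⋖ ⟨.inl k⟩) : JCovBy (b j) (a k) :=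
    jCovBy_of_covBy ((apply_covBy_apply_iff e.symm).2 h)
  have hflip (j : Fin n) : χ (a (j + 1)) = !χ (a j) :=
    hχ _ (ha_max j) _ (ha_max (j + 1)) (ha_inj.ne (hsucc_ne j)) (b j)
      (hcov j j (Crown.inr_covBy_inl_self j)) (hcov j _ (Crown.inr_covBy_inl_add_one j))
  have hcycle : n • (1 : Fin n) = 0 := by simpa using card_nsmul_eq_zero (x := (1 : Fin n))
  exact Nat.not_even_iff_odd.2 hodd (even_of_forall_add_eq_not (f := χ ∘ a) hflip hcycle)

/-- If `n ≥ 3` is odd and the poset of join-irreducible elements of a finite distributive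
lattice `D` is order-isomorphic to the `n`-crown, then `D` does not satisfy the Bipartite
Maximal Elements Property. -/
theorem not_bipartiteMaxElements_of_joinIrred_poset_iso_odd_crown
    (n : ℕ) (hn : 3 ≤ n) (hodd : Odd n)
    (D : Type*) [DistribLattice D] [OrderBot D] [Fintype D]
    (h : Nonempty ({x : D // JoinIrred x} ≃o Crown n)) :
    ¬BipartiteMaxElements D :=
  not_bipartiteMaxElements_of_joinIrred_poset_iso_odd_crown_general n hn hodd D h
end
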